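/- arXiv:hep-th/9607234 — 9 statements merged into one kernel-verified Lean document; each statement's English description precedes it below -/
import Mathlib

section
/- Let N ≥ 1 and let K : ℝ×ℝ → ℝ be measurable such that ∫∫ |λ|^a |μ|^b |K(λ,μ)| dλ dμ < ∞ for all 0 ≤ a, b ≤ N−1. Then (1/N!) ∫_{ℝ^N}∫_{ℝ^N} Δ(λ_1,…,λ_N) Δ(μ_1,…,μ_N) ∏_{k=1}^N K(λ_k,μ_k) dλ dμ = det( M_{ij} )_{i,j=1,…,N}, where M_{ij} := ∫∫ λ^{i−1} μ^{j−1} K(λ,μ) dλ dμ. (This is the determinant evaluation of the two-matrix and multi-matrix model eigenvalue integrals.) -/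
/-!
Both Vandermonde products are determinants, `Δ(λ) = det (λₖ ^ i)`, so after Fubini the integral is
an instance of Andréief's identity on `ℝ × ℝ`. Expanding `det (f i (xₖ)) * det (g j (xₖ)) * ∏ w (xₖ)`
by Leibniz gives a signed sum over pairs `(σ, τ)` of products `∏ₖ f (σ k) (xₖ) g (τ k) (xₖ) w (xₖ)`,
which integrate coordinatewise to `∏ₖ M (σ k) (τ k)`. For fixed `σ` the sum over `τ` is
`sign σ * det M`, so the total is `N! * det M`.
-/

open MeasureTheory

/-- The Vandermonde product `Δ(l₁,…,l_N) = ∏_{j<i} (l_i − l_j)`. -/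
noncomputable def vdm {N : ℕ} (l : Fin N → ℝ) : ℝ :=
  ∏ i : Fin N, ∏ j ∈ Finset.Ioi i, (l j - l i)

open Equiv Matrix

section Algebra

variable {ι R : Type*} [Fintype ι] [DecidableEq ι] [CommRing R]

theorem Matrix.sum_sign_mul_prod_permute (S : Matrix ι ι R) (σ : Perm ι) :
    ∑ τ : Perm ι, (Perm.sign τ : R) * ∏ k, S (σ k) (τ k) = Perm.sign σ * S.det := by
  rw [← det_permute, ← det_transpose, det_apply']
  rfl

theorem Matrix.sum_sum_sign_mul_sign_mul_prod (S : Matrix ι ι R) :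
    ∑ σ : Perm ι, ∑ τ : Perm ι, (Perm.sign σ * Perm.sign τ : R) * ∏ k, S (σ k) (τ k) =
      (Fintype.card ι).factorial * S.det := by
  have hsign (σ : Perm ι) : (Perm.sign σ : R) * Perm.sign σ = 1 := by
    rw [← Int.cast_mul, ← Units.val_mul, Int.units_mul_self]
    simp
  simp_rw [mul_assoc, ← Finset.mul_sum, sum_sign_mul_prod_permute, ← mul_assoc, hsign, one_mul,
    Finset.sum_const, Finset.card_univ, Fintype.card_perm, nsmul_eq_mul]

theorem Matrix.det_mul_det_mul_prod_eq_sum {α : Type*} (f g : ι → α → R) (w : α → R)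
    (x : ι → α) :
    (of fun i k => f i (x k)).det * (of fun j k => g j (x k)).det * ∏ k, w (x k) =
      ∑ σ : Perm ι, ∑ τ : Perm ι,
        (Perm.sign σ * Perm.sign τ : R) * ∏ k, f (σ k) (x k) * g (τ k) (x k) * w (x k) := by
  simp_rw [det_apply', Finset.sum_mul_sum, Finset.sum_mul, Finset.prod_mul_distrib, of_apply]
  refine Finset.sum_congr rfl fun σ _ => Finset.sum_congr rfl fun τ _ => ?_
  ring

end Algebra

section Andreief

variable {α ι 𝕜 : Type*} [MeasurableSpace α] [Fintype ι] [DecidableEq ι] [RCLike 𝕜]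
  {μ : Measure α} [SigmaFinite μ] {f g : ι → α → 𝕜} {w : α → 𝕜}

theorem integrable_det_mul_det_mul_prod (h : ∀ i j, Integrable (fun a => f i a * g j a * w a) μ) :
    Integrable (fun x : ι → α =>
      (of fun i k => f i (x k)).det * (of fun j k => g j (x k)).det * ∏ k, w (x k))
      (Measure.pi fun _ => μ) := by
  simp_rw [det_mul_det_mul_prod_eq_sum]
  exact integrable_finsetSum _ fun σ _ => integrable_finsetSum _ fun τ _ =>
    (Integrable.fintype_prod fun k => h (σ k) (τ k)).const_mul _

theorem integral_det_mul_det_mul_prod (h : ∀ i j, Integrable (fun a => f i a * g j a * w a) μ) :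
    ∫ x : ι → α, (of fun i k => f i (x k)).det * (of fun j k => g j (x k)).det * ∏ k, w (x k)
        ∂(Measure.pi fun _ => μ) =
      ((Fintype.card ι).factorial : 𝕜) * (of fun i j => ∫ a, f i a * g j a * w a ∂μ).det := by
  have hterm (σ τ : Perm ι) := (Integrable.fintype_prod (μ := fun _ => μ)
    fun k => h (σ k) (τ k)).const_mul (Perm.sign σ * Perm.sign τ : 𝕜)
  simp_rw [det_mul_det_mul_prod_eq_sum]
  rw [← sum_sum_sign_mul_sign_mul_prod,
    integral_finsetSum _ fun σ _ => integrable_finsetSum _ fun τ _ => hterm σ τ]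
  refine Finset.sum_congr rfl fun σ _ => ?_
  rw [integral_finsetSum _ fun τ _ => hterm σ τ]
  refine Finset.sum_congr rfl fun τ _ => ?_
  rw [integral_const_mul, integral_fintype_prod_eq_prod (fun k a => f (σ k) a * g (τ k) a * w a)]
  rfl

end Andreief

theorem integral_integral_pi_eq_integral_pi_prod {α β ι E : Type*} [MeasurableSpace α]
    [MeasurableSpace β] [Fintype ι] [NormedAddCommGroup E] [NormedSpace ℝ E] {μ : Measure α}
    {ν : Measure β} [SigmaFinite μ] [SigmaFinite ν] {F : (ι → α) → (ι → β) → E}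
    (hF : Integrable (fun z : ι → α × β => F (fun k => (z k).1) (fun k => (z k).2))
      (Measure.pi fun _ => μ.prod ν)) :
    ∫ x, ∫ y, F x y ∂Measure.pi (fun _ => ν) ∂Measure.pi (fun _ => μ) =
      ∫ z, F (fun k => (z k).1) (fun k => (z k).2) ∂Measure.pi fun _ => μ.prod ν := by
  have hmp := measurePreserving_arrowProdEquivProdArrow α β ι (fun _ => μ) (fun _ => ν)
  rw [integral_integral, ← hmp.integral_comp']
  · rfl
  · exact (hmp.integrable_comp_emb (MeasurableEquiv.measurableEmbedding _)).mp hF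

theorem vdm_eq_det {N : ℕ} (l : Fin N → ℝ) : vdm l = (of fun i k : Fin N => l k ^ (i : ℕ)).det := by
  rw [vdm, ← det_vandermonde, ← det_transpose]
  rfl

theorem stmt0_general (N : ℕ) (K : ℝ × ℝ → ℝ) (hK : Measurable K)
    (hint : ∀ a b : ℕ, a ≤ N - 1 → b ≤ N - 1 →
      Integrable (fun p : ℝ × ℝ => |p.1| ^ a * |p.2| ^ b * |K p|)) :
    (1 / (N.factorial : ℝ)) *
        ∫ lam : Fin N → ℝ, ∫ mu : Fin N → ℝ,
          vdm lam * vdm mu * ∏ k : Fin N, K (lam k, mu k) =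
      Matrix.det (Matrix.of fun i j : Fin N =>
        ∫ p : ℝ × ℝ, p.1 ^ (i : ℕ) * p.2 ^ (j : ℕ) * K p) := by
  have hmoment (i j : Fin N) : Integrable (fun p : ℝ × ℝ => p.1 ^ (i : ℕ) * p.2 ^ (j : ℕ) * K p) :=
    (hint i j (Nat.le_pred_of_lt i.isLt) (Nat.le_pred_of_lt j.isLt)).mono'
      (by fun_prop) (ae_of_all _ fun p => by simp)
  have hintegrable := integrable_det_mul_det_mul_prod (μ := volume) hmoment
  have hAndreief := integral_det_mul_det_mul_prod (μ := volume) hmoment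
  simp_rw [← vdm_eq_det] at hintegrable hAndreief
  rw [volume_pi, integral_integral_pi_eq_integral_pi_prod (μ := volume) (ν := volume) hintegrable]
  simp only [Prod.mk.eta, ← Measure.volume_eq_prod]
  rw [hAndreief, Fintype.card_fin]
  field_simp

theorem stmt0 (N : ℕ) (hN : 1 ≤ N) (K : ℝ × ℝ → ℝ) (hK : Measurable K)
    (hint : ∀ a b : ℕ, a ≤ N - 1 → b ≤ N - 1 →
      Integrable (fun p : ℝ × ℝ => |p.1| ^ a * |p.2| ^ b * |K p|)) :
    (1 / (N.factorial : ℝ)) *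
        ∫ lam : Fin N → ℝ, ∫ mu : Fin N → ℝ,
          vdm lam * vdm mu * ∏ k : Fin N, K (lam k, mu k) =
      Matrix.det (Matrix.of fun i j : Fin N =>
        ∫ p : ℝ × ℝ, p.1 ^ (i : ℕ) * p.2 ^ (j : ℕ) * K p) :=
  stmt0_general N K hK hint
end

section
/- Let N ≥ 1 and let f_1,…,f_N : ℝ → ℝ be measurable functions such that ∫ |μ|^{i−1} |f_j(μ)| dμ < ∞ for all 1 ≤ i, j ≤ N. Then ∫_{ℝ^N} Δ(μ_1,…,μ_N) ∏_{k=1}^N f_k(μ_k) dμ = det( ∫_ℝ μ^{i−1} f_j(μ) dμ )_{i,j=1,…,N}. -/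
/-!
The Vandermonde product is `det (μ_k ^ i)_{i,k}`. For any row functions `φ i`, expanding
`det (φ i (x k))` over permutations makes each term `sign σ • ∏ k, φ (σ k) (x k) * f k (x k)` a
product of one-variable functions, so Fubini integrates it to `sign σ • ∏ k, ∫ φ (σ k) * f k`, and
summing over `σ` gives back the determinant of the matrix `(∫ φ i * f j)_{i,j}`.
-/

open MeasureTheory

theorem integral_det_mul_prod_eq_det_integral {ι 𝕜 α : Type*} [Fintype ι] [DecidableEq ι]
    [RCLike 𝕜] [MeasurableSpace α] {μ : Measure α} [SigmaFinite μ] (φ f : ι → α → 𝕜)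
    (hint : ∀ i j, Integrable (fun t => φ i t * f j t) μ) :
    ∫ x : ι → α, (Matrix.of fun i k => φ i (x k)).det * ∏ k, f k (x k) ∂(Measure.pi fun _ => μ) =
      (Matrix.of fun i j => ∫ t, φ i t * f j t ∂μ).det := by
  have hterm : ∀ (σ : Equiv.Perm ι) (x : ι → α),
      (∏ k, φ (σ k) (x k)) * ∏ k, f k (x k) = ∏ k, φ (σ k) (x k) * f k (x k) :=
    fun _ _ => Finset.prod_mul_distrib.symm
  simp only [Matrix.det_apply, Matrix.of_apply, Finset.sum_mul, smul_mul_assoc, hterm]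
  rw [integral_finsetSum _ fun σ _ => (Integrable.fintype_prod fun k => hint (σ k) k).smul _]
  simp only [Units.smul_def, zsmul_eq_mul, integral_const_mul]
  exact Finset.sum_congr rfl fun σ _ =>
    congrArg _ (integral_fintype_prod_eq_prod fun k t => φ (σ k) t * f k t)

theorem vdm_eq_det_pow {N : ℕ} (l : Fin N → ℝ) :
    vdm l = (Matrix.of fun i k : Fin N => l k ^ (i : ℕ)).det := by
  rw [vdm, ← Matrix.det_vandermonde, ← Matrix.det_transpose]
  rfl

theorem integrable_pow_mul_of_integrable_abs_pow_mul {μ : Measure ℝ} {g : ℝ → ℝ}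
    (hg : Measurable g) (n : ℕ) (h : Integrable (fun t : ℝ => |t| ^ n * |g t|) μ) :
    Integrable (fun t : ℝ => t ^ n * g t) μ := by
  refine (integrable_norm_iff ((measurable_id.pow_const n).mul hg).aestronglyMeasurable).mp ?_
  simpa [abs_mul, abs_pow] using h

theorem stmt1_general (N : ℕ) (f : Fin N → ℝ → ℝ)
    (hf : ∀ j, Measurable (f j))
    (hint : ∀ i : ℕ, i ≤ N - 1 → ∀ j : Fin N,
      Integrable (fun mu : ℝ => |mu| ^ i * |f j mu|)) :
    ∫ mu : Fin N → ℝ, vdm mu * ∏ k : Fin N, f k (mu k) =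
      Matrix.det (Matrix.of fun i j : Fin N =>
        ∫ mu : ℝ, mu ^ (i : ℕ) * f j mu) := by
  simp only [vdm_eq_det_pow]
  exact integral_det_mul_prod_eq_det_integral (fun (i : Fin N) (t : ℝ) => t ^ (i : ℕ)) f fun i j =>
    integrable_pow_mul_of_integrable_abs_pow_mul (hf j) i (hint i (Nat.le_sub_one_of_lt i.isLt) j)

theorem stmt1 (N : ℕ) (hN : 1 ≤ N) (f : Fin N → ℝ → ℝ)
    (hf : ∀ j, Measurable (f j))
    (hint : ∀ i : ℕ, i ≤ N - 1 → ∀ j : Fin N,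
      Integrable (fun mu : ℝ => |mu| ^ i * |f j mu|)) :
    ∫ mu : Fin N → ℝ, vdm mu * ∏ k : Fin N, f k (mu k) =
      Matrix.det (Matrix.of fun i j : Fin N =>
        ∫ mu : ℝ, mu ^ (i : ℕ) * f j mu) :=
  stmt1_general N f hf hint
end

section
/- Let N ≥ 1 and let w : ℝ → ℝ be measurable with ∫ |λ|^j |w(λ)| dλ < ∞ for 0 ≤ j ≤ 2N−2. Suppose P_0, P_1, …, P_{N−1} are monic real polynomials with deg P_n = n that are orthogonal with respect to w, i.e. ∫ P_n(λ) P_m(λ) w(λ) dλ = 0 for n ≠ m, and set h_n := ∫ P_n(λ)^2 w(λ) dλ. Then (1/N!) ∫_{ℝ^N} Δ(λ_1,…,λ_N)^2 ∏_{k=1}^N w(λ_k) dλ = ∏_{n=0}^{N−1} h_n. (This is the orthogonal-polynomial evaluation Z_N = h_0 h_1 ⋯ h_{N−1} of the one-matrix model partition function.) -/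
/-!
Since `P₀, …, P_{N-1}` are monic with `deg Pₙ = n`, column operations turn the Vandermonde
matrix into `[Pᵢ(λⱼ)]`, so `Δ² ∏ w(λₖ) = det[Pᵢ(λⱼ)] · det[w(λⱼ) Pᵢ(λⱼ)]`. Andréief's identity
integrates such a product of determinants to `N!` times the determinant of the Gram matrix
`[∫ Pᵢ Pⱼ w]`, which orthogonality makes diagonal with entries `hᵢ`.
-/

open MeasureTheory

open Matrix Equiv Polynomial

theorem Matrix.sum_perm_sum_perm_sign_mul_prod {ι R : Type*} [Fintype ι] [DecidableEq ι]
    [CommRing R] (G : Matrix ι ι R) :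
    ∑ σ : Perm ι, ∑ τ : Perm ι, (Perm.sign σ : R) * Perm.sign τ * ∏ i, G (σ i) (τ i) =
      (Fintype.card ι).factorial * G.det := by
  have inner : ∀ σ : Perm ι,
      ∑ τ : Perm ι, (Perm.sign σ : R) * Perm.sign τ * ∏ i, G (σ i) (τ i) = G.det := by
    intro σ
    -- substitute `τ = ρ * σ` and reindex the product by `σ`: what is left is `det Gᵀ`
    rw [← det_transpose, det_apply', ← Equiv.sum_comp (Equiv.mulRight σ)]
    refine Finset.sum_congr rfl fun ρ _ => ?_
    have hsign : (Perm.sign σ : R) * Perm.sign (ρ * σ) = Perm.sign ρ := by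
      rw [Perm.sign_mul, Units.val_mul, Int.cast_mul, mul_left_comm, ← Int.cast_mul,
        ← Units.val_mul, Int.units_mul_self, Units.val_one, Int.cast_one, mul_one]
    rw [Equiv.coe_mulRight, hsign]
    exact congrArg _ (Equiv.prod_comp σ fun i => G i (ρ i))
  rw [Finset.sum_congr rfl fun σ _ => inner σ, Finset.sum_const, Finset.card_univ,
    Fintype.card_perm, nsmul_eq_mul]

theorem integral_det_mul_det_pi {ι α : Type*} [Fintype ι] [DecidableEq ι] [MeasurableSpace α]
    (μ : Measure α) [SigmaFinite μ] (φ ψ : ι → α → ℝ)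
    (hint : ∀ i j, Integrable (fun t => φ i t * ψ j t) μ) :
    ∫ x : ι → α, (of fun i j => φ i (x j)).det * (of fun i j => ψ i (x j)).det
        ∂(Measure.pi fun _ => μ) =
      (Fintype.card ι).factorial * (of fun i j => ∫ t, φ i t * ψ j t ∂μ).det := by
  have hexpand : ∀ x : ι → α,
      (of fun i j => φ i (x j)).det * (of fun i j => ψ i (x j)).det =
        ∑ σ : Perm ι, ∑ τ : Perm ι, (Perm.sign σ : ℝ) * Perm.sign τ *
          ∏ i, φ (σ i) (x i) * ψ (τ i) (x i) := by
    intro x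
    simp only [det_apply', of_apply, Finset.sum_mul_sum, Finset.prod_mul_distrib]
    exact Finset.sum_congr rfl fun _ _ => Finset.sum_congr rfl fun _ _ => by ring
  have hterm : ∀ σ τ : Perm ι, Integrable (fun x : ι → α => (Perm.sign σ : ℝ) * Perm.sign τ *
      ∏ i, φ (σ i) (x i) * ψ (τ i) (x i)) (Measure.pi fun _ => μ) := fun σ τ =>
    (Integrable.fintype_prod (f := fun i t => φ (σ i) t * ψ (τ i) t)
      fun i => hint _ _).const_mul _
  simp_rw [hexpand]
  rw [integral_finsetSum _ fun σ _ => integrable_finsetSum _ fun τ _ => hterm σ τ,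
    ← sum_perm_sum_perm_sign_mul_prod]
  refine Finset.sum_congr rfl fun σ _ => ?_
  rw [integral_finsetSum _ fun τ _ => hterm σ τ]
  refine Finset.sum_congr rfl fun τ _ => ?_
  rw [integral_const_mul, integral_fintype_prod_eq_prod (f := fun i t => φ (σ i) t * ψ (τ i) t)]
  rfl

theorem Polynomial.integrable_eval_mul_of_natDegree_le {μ : Measure ℝ} {w : ℝ → ℝ}
    (hw : AEStronglyMeasurable w μ) {d : ℕ}
    (hint : ∀ j ≤ d, Integrable (fun x => |x| ^ j * |w x|) μ) {Q : ℝ[X]}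
    (hQ : Q.natDegree ≤ d) : Integrable (fun x => Q.eval x * w x) μ := by
  have hmono : ∀ j ≤ d, Integrable (fun x => x ^ j * w x) μ := fun j hj =>
    (integrable_norm_iff ((continuous_pow j).aestronglyMeasurable.mul hw)).mp <|
      (hint j hj).congr <| ae_of_all _ fun x => by simp
  have hsum : (fun x => Q.eval x * w x) =
      fun x => ∑ j ∈ Finset.range (d + 1), Q.coeff j * (x ^ j * w x) := by
    ext x
    rw [eval_eq_sum_range' (Nat.lt_succ_of_le hQ), Finset.sum_mul]
    exact Finset.sum_congr rfl fun _ _ => mul_assoc _ _ _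
  rw [hsum]
  exact integrable_finsetSum _ fun j hj =>
    (hmono j (Nat.lt_succ_iff.mp (Finset.mem_range.mp hj))).const_mul _

theorem vdm_eq_det_eval {N : ℕ} (l : Fin N → ℝ) (p : Fin N → ℝ[X])
    (hdeg : ∀ i, (p i).natDegree = i) (hmonic : ∀ i, (p i).Monic) :
    vdm l = (of fun i j => (p i).eval (l j)).det := by
  rw [vdm, ← det_vandermonde, det_eval_matrixOfPolynomials_eq_det_vandermonde l p hdeg hmonic,
    ← det_transpose]
  rfl

theorem stmt3_general (N : ℕ) (w : ℝ → ℝ) (hw : Measurable w)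
    (hint : ∀ j : ℕ, j ≤ 2 * N - 2 →
      Integrable (fun x : ℝ => |x| ^ j * |w x|))
    (P : ℕ → Polynomial ℝ)
    (hmonic : ∀ n < N, (P n).Monic)
    (hdeg : ∀ n < N, (P n).natDegree = n)
    (horth : ∀ n < N, ∀ m < N, n ≠ m →
      ∫ x : ℝ, (P n).eval x * (P m).eval x * w x = 0)
    (h : ℕ → ℝ) (hh : ∀ n, h n = ∫ x : ℝ, ((P n).eval x) ^ 2 * w x) :
    (1 / (N.factorial : ℝ)) *
        ∫ lam : Fin N → ℝ, (vdm lam) ^ 2 * ∏ k : Fin N, w (lam k) =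
      ∏ n ∈ Finset.range N, h n := by
  have hsplit : ∀ lam : Fin N → ℝ, vdm lam ^ 2 * ∏ k, w (lam k) =
      (of fun i j : Fin N => (P i).eval (lam j)).det *
        (of fun i j : Fin N => w (lam j) * (P i).eval (lam j)).det := by
    intro lam
    have hrow := det_mul_row (fun j => w (lam j)) (of fun i j : Fin N => (P i).eval (lam j))
    simp only [of_apply] at hrow
    rw [hrow, vdm_eq_det_eval lam (fun i => P i) (fun i => hdeg i i.is_lt)
      (fun i => hmonic i i.is_lt)]
    ring
  have hpair : ∀ i j : Fin N,
      Integrable (fun t => (P i).eval t * (w t * (P j).eval t)) := by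
    intro i j
    have hdeg_le : (P i * P j).natDegree ≤ 2 * N - 2 :=
      natDegree_mul_le.trans (by rw [hdeg i i.is_lt, hdeg j j.is_lt]; omega)
    convert integrable_eval_mul_of_natDegree_le hw.aestronglyMeasurable hint hdeg_le using 2
    rw [eval_mul]; ring
  have hgram : (of fun i j : Fin N => ∫ t, (P i).eval t * (w t * (P j).eval t)) =
      diagonal fun i : Fin N => h i := by
    ext i j
    rcases eq_or_ne i j with rfl | hij
    · simp only [of_apply, diagonal_apply_eq, hh]
      congr 1; ext t; ring
    · rw [of_apply, diagonal_apply_ne _ hij, ← horth i i.is_lt j j.is_lt (Fin.val_ne_of_ne hij)]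
      congr 1; ext t; ring
  simp_rw [hsplit]
  rw [volume_pi, integral_det_mul_det_pi volume (fun (i : Fin N) x => (P i).eval x)
    (fun (i : Fin N) x => w x * (P i).eval x) hpair, hgram, det_diagonal, Fintype.card_fin,
    Fin.prod_univ_eq_prod_range h N]
  field_simp

theorem stmt3 (N : ℕ) (hN : 1 ≤ N) (w : ℝ → ℝ) (hw : Measurable w)
    (hint : ∀ j : ℕ, j ≤ 2 * N - 2 →
      Integrable (fun x : ℝ => |x| ^ j * |w x|))
    (P : ℕ → Polynomial ℝ)
    (hmonic : ∀ n < N, (P n).Monic)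
    (hdeg : ∀ n < N, (P n).natDegree = n)
    (horth : ∀ n < N, ∀ m < N, n ≠ m →
      ∫ x : ℝ, (P n).eval x * (P m).eval x * w x = 0)
    (h : ℕ → ℝ) (hh : ∀ n, h n = ∫ x : ℝ, ((P n).eval x) ^ 2 * w x) :
    (1 / (N.factorial : ℝ)) *
        ∫ lam : Fin N → ℝ, (vdm lam) ^ 2 * ∏ k : Fin N, w (lam k) =
      ∏ n ∈ Finset.range N, h n :=
  stmt3_general N w hw hint P hmonic hdeg horth h hh
end

section
/- Let n ≥ 1 and let w : ℝ → ℝ be measurable with ∫ |λ|^j |w(λ)| dλ < ∞ for 0 ≤ j ≤ 2n−1, and set m_j := ∫ λ^j w(λ) dλ. Assume D_n := det( m_{i+j−2} )_{i,j=1,…,n} ≠ 0, and define P_n(λ) := det( λ·m_{i+j−2} − m_{i+j−1} )_{i,j=1,…,n} / D_n. Then P_n is a monic polynomial of degree n satisfying the orthogonality relations ∫ P_n(λ) λ^l w(λ) dλ = 0 for all 0 ≤ l ≤ n−1. (This is the determinant formula for the monic orthogonal polynomials of the one-matrix model.) -/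
/-!
With `H` the Hankel matrix of the moments `m_{i+j}` and `H'` that of the shifted moments
`m_{i+j+1}`, put `C = H' H⁻¹`. Then `det (λ H - H') / det H = det (λ - C)` is the characteristic
polynomial of `C`, monic of degree `n`. Since `C H = H'`, `C` shifts moment vectors:
`C^k (m_0, …, m_{n-1}) = (m_k, …, m_{k+n-1})` for `k ≤ n`. Applying Cayley–Hamilton to the first
of these vectors gives `∑_k p_k m_{k+l} = 0` for `l < n`, which is `∫ P_n(λ) λ^l w(λ) dλ = 0`.
-/

open MeasureTheory Matrix Polynomial

section Hankel

variable {K : Type*} [CommRing K]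

def hankelMatrix (n : ℕ) (m : ℕ → K) : Matrix (Fin n) (Fin n) K :=
  of fun i j => m (i + j)

lemma eval_charpoly_mul_inv_mul_det {ι : Type*} [Fintype ι] [DecidableEq ι]
    (A B : Matrix ι ι K) (hA : IsUnit A.det) (x : K) :
    (B * A⁻¹).charpoly.eval x * A.det = (x • A - B).det := by
  rw [eval_charpoly, ← det_mul, sub_mul, nonsing_inv_mul_cancel_right _ _ hA, scalar_apply,
    ← smul_eq_diagonal_mul]

variable {n : ℕ} {m : ℕ → K} {C : Matrix (Fin n) (Fin n) K}

lemma pow_mulVec_hankel_col_zero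
    (hC : C * hankelMatrix n m = hankelMatrix n (fun k => m (k + 1))) {k : ℕ} (hk : k ≤ n) :
    C ^ k *ᵥ (fun i : Fin n => m i) = fun i : Fin n => m (i + k) := by
  induction k with
  | zero => simp
  | succ k ih =>
    rw [pow_succ', ← mulVec_mulVec, ih (by omega)]
    funext i
    have := congrFun (congrFun hC i) ⟨k, by omega⟩
    simp only [hankelMatrix, mul_apply, of_apply] at this
    rw [mulVec, dotProduct, ← add_assoc]
    exact this

lemma sum_coeff_charpoly_mul_eq_zero [Nontrivial K]
    (hC : C * hankelMatrix n m = hankelMatrix n (fun k => m (k + 1))) (i : Fin n) :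
    ∑ k ∈ Finset.range (n + 1), C.charpoly.coeff k * m (k + i) = 0 := by
  have h := congrFun (congrArg (· *ᵥ (fun i : Fin n => m i)) (aeval_self_charpoly C)) i
  simp only [aeval_eq_sum_range, charpoly_natDegree_eq_dim, Fintype.card_fin, sum_mulVec,
    smul_mulVec, zero_mulVec, Pi.zero_apply] at h
  rw [← h, Finset.sum_apply]
  refine Finset.sum_congr rfl fun k hk => ?_
  rw [Pi.smul_apply, pow_mulVec_hankel_col_zero hC (Finset.mem_range_succ_iff.mp hk),
    smul_eq_mul, add_comm]

end Hankel

lemma integral_eval_mul_pow_mul {μ : Measure ℝ} {w : ℝ → ℝ} (p : ℝ[X]) (l : ℕ)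
    (hint : ∀ k ≤ p.natDegree, Integrable (fun x => x ^ (k + l) * w x) μ) :
    ∫ x, p.eval x * x ^ l * w x ∂μ =
      ∑ k ∈ Finset.range (p.natDegree + 1), p.coeff k * ∫ x, x ^ (k + l) * w x ∂μ := by
  simp_rw [eval_eq_sum_range, Finset.sum_mul, ← integral_const_mul]
  rw [← integral_finsetSum _ fun k hk => (hint k (Finset.mem_range_succ_iff.mp hk)).const_mul _]
  congr with x
  refine Finset.sum_congr rfl fun k _ => ?_
  ring

theorem stmt4 (n : ℕ) (hn : 1 ≤ n) (w : ℝ → ℝ) (hw : Measurable w)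
    (hint : ∀ j : ℕ, j ≤ 2 * n - 1 →
      Integrable (fun x : ℝ => |x| ^ j * |w x|))
    (m : ℕ → ℝ) (hm : ∀ j, m j = ∫ x : ℝ, x ^ j * w x)
    (D : ℝ) (hD : D = Matrix.det (Matrix.of fun i j : Fin n => m ((i : ℕ) + (j : ℕ))))
    (hD0 : D ≠ 0)
    (P : ℝ → ℝ)
    (hP : ∀ x, P x = Matrix.det (Matrix.of fun i j : Fin n =>
      x * m ((i : ℕ) + (j : ℕ)) - m ((i : ℕ) + (j : ℕ) + 1)) / D) :
    (∃ p : Polynomial ℝ, p.Monic ∧ p.natDegree = n ∧ ∀ x, p.eval x = P x) ∧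
      (∀ l : ℕ, l ≤ n - 1 → ∫ x : ℝ, P x * x ^ l * w x = 0) := by
  subst hD
  set A := hankelMatrix n m
  set B := hankelMatrix n (fun k => m (k + 1))
  have hA : IsUnit A.det := hD0.isUnit
  set p := (B * A⁻¹).charpoly
  have hdeg : p.natDegree = n := by simp [p, charpoly_natDegree_eq_dim]
  have hPp : ∀ x, P x = p.eval x := by
    intro x
    rw [hP, div_eq_iff hD0]
    refine (congrArg det ?_).trans (eval_charpoly_mul_inv_mul_det A B hA x).symm
    ext i j
    simp [A, B, hankelMatrix]
  refine ⟨⟨p, charpoly_monic _, hdeg, fun x => (hPp x).symm⟩, fun l hl => ?_⟩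
  have hmoment : ∀ j ≤ 2 * n - 1, Integrable (fun x => x ^ j * w x) := fun j hj =>
    (integrable_norm_iff (by fun_prop)).mp (by simpa [abs_mul, abs_pow] using hint j hj)
  simp_rw [hPp]
  rw [integral_eval_mul_pow_mul p l fun k hk => hmoment _ (by omega), hdeg]
  simp_rw [← hm]
  exact sum_coeff_charpoly_mul_eq_zero (nonsing_inv_mul_cancel_right _ _ hA) ⟨l, by omega⟩
end

section
/- Let N ≥ 1, r ≥ 1 be integers and let ρ : ℝ → ℝ be measurable such that for every (x,s) ∈ ℝ², ∫ (1+|λ|)^{(N−1)(r+1)} |ρ(λ)| e^{xλ+sλ^r} dλ < ∞. Then Φ(x,s) := ∫ ρ(λ) e^{xλ+sλ^r} dλ has partial derivatives ∂_x^{i−1}∂_s^{j−1} Φ(x,s) = ∫ λ^{(i−1)+r(j−1)} ρ(λ) e^{xλ+sλ^r} dλ, and for every (x,s): det( ∂_x^{i−1}∂_s^{j−1} Φ(x,s) )_{i,j=1,…,N} = (1/N!) ∫_{ℝ^N} ∏_{1≤j<i≤N} (λ_i − λ_j)(λ_i^r − λ_j^r) · ∏_{k=1}^N ρ(λ_k)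 e^{xλ_k + sλ_k^r} dλ. (This is the spectral 'eigenvalue-integral' representation of the tau-functions of Darboux–Bäcklund orbits of the constrained cKP_{r,1} hierarchy.) -/
/-!
Differentiating under the integral sign, `∂ₓ` multiplies the integrand of `Φ` by `λ` and `∂ₛ`
by `λ ^ r`; this is legitimate because the weight `(1 + |λ|) ^ ((N - 1) * (r + 1))` dominates every
power of `λ` that occurs, and `e ^ (t u) ≤ e ^ ((t₀ + 1) u) + e ^ ((t₀ - 1) u)` for `|t - t₀| ≤ 1`
gives a dominating function near each `t₀`. So the matrix is the moment matrix
`(∫ λ ^ i · λ ^ (r j) ρ(λ) e ^ (xλ + sλ ^ r) dλ)`, and Andréief's identity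
`det (∫ fᵢ gⱼ) = (1 / N!) ∫ det (fᵢ (λₖ)) det (gⱼ (λₖ))` turns its determinant into the eigenvalue
integral: the two determinants are the Vandermonde determinants of `λ` and of `λ ^ r`.
-/

open MeasureTheory Real

section ExpIntegral

lemma exp_mul_le_exp_add_exp {t t₀ : ℝ} (ht : |t - t₀| ≤ 1) (u : ℝ) :
    exp (t * u) ≤ exp ((t₀ + 1) * u) + exp ((t₀ - 1) * u) := by
  obtain ⟨ht₁, ht₂⟩ := abs_le.mp ht
  rcases le_total 0 u with hu | hu
  · have : t * u ≤ (t₀ + 1) * u := by nlinarith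
    exact (exp_le_exp.2 this).trans (le_add_of_nonneg_right (exp_pos _).le)
  · have : t * u ≤ (t₀ - 1) * u := by nlinarith
    exact (exp_le_exp.2 this).trans (le_add_of_nonneg_left (exp_pos _).le)

lemma norm_mul_exp_le {t t₀ : ℝ} (ht : |t - t₀| ≤ 1) (c u : ℝ) :
    ‖c * exp (t * u)‖ ≤ ‖c * exp ((t₀ + 1) * u)‖ + ‖c * exp ((t₀ - 1) * u)‖ := by
  simp only [norm_mul, norm_eq_abs, abs_exp, ← mul_add]
  gcongr
  exact exp_mul_le_exp_add_exp ht u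

variable {α : Type*} [MeasurableSpace α] {μ : Measure α} {a g : α → ℝ}

lemma continuous_integral_mul_exp (hg : ∀ t, Integrable (fun x => g x * exp (t * a x)) μ) :
    Continuous fun t => ∫ x, g x * exp (t * a x) ∂μ := by
  refine continuous_iff_continuousAt.mpr fun t₀ => continuousAt_of_dominated
    (.of_forall fun t => (hg t).aestronglyMeasurable) ?_
    ((hg (t₀ + 1)).norm.add (hg (t₀ - 1)).norm) (.of_forall fun x => by fun_prop)
  filter_upwards [Metric.closedBall_mem_nhds t₀ one_pos] with t ht
  exact .of_forall fun x => norm_mul_exp_le (Metric.mem_closedBall.mp ht) (g x) (a x)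

lemma hasDerivAt_integral_mul_exp (hg : ∀ t, Integrable (fun x => g x * exp (t * a x)) μ)
    (hag : ∀ t, Integrable (fun x => a x * g x * exp (t * a x)) μ) (t₀ : ℝ) :
    HasDerivAt (fun t => ∫ x, g x * exp (t * a x) ∂μ)
      (∫ x, a x * g x * exp (t₀ * a x) ∂μ) t₀ := by
  refine (hasDerivAt_integral_of_dominated_loc_of_deriv_le (Metric.closedBall_mem_nhds t₀ one_pos)
    (.of_forall fun t => (hg t).aestronglyMeasurable) (hg t₀) (hag t₀).aestronglyMeasurable
    (.of_forall fun x t ht => norm_mul_exp_le (Metric.mem_closedBall.mp ht) (a x * g x) (a x))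
    ((hag (t₀ + 1)).norm.add (hag (t₀ - 1)).norm) (.of_forall fun x t _ => ?_)).2
  exact ((hasDerivAt_mul_const (a x)).exp.const_mul (g x)).congr_deriv (by ring)

lemma iteratedDeriv_integral_mul_exp {n : ℕ}
    (hg : ∀ k ≤ n, ∀ t, Integrable (fun x => a x ^ k * g x * exp (t * a x)) μ)
    {k : ℕ} (hk : k ≤ n) :
    iteratedDeriv k (fun t => ∫ x, g x * exp (t * a x) ∂μ) =
      fun t => ∫ x, a x ^ k * g x * exp (t * a x) ∂μ := by
  induction k with
  | zero => simp
  | succ k ih =>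
    rw [iteratedDeriv_succ, ih (by omega)]
    refine funext fun t =>
      (hasDerivAt_integral_mul_exp (hg k (by omega)) (fun t => ?_) t).deriv.trans ?_
    · simpa only [pow_succ', mul_assoc] using hg (k + 1) hk t
    · simp only [pow_succ', mul_assoc]

lemma contDiff_integral_mul_exp {n : ℕ}
    (hg : ∀ k ≤ n, ∀ t, Integrable (fun x => a x ^ k * g x * exp (t * a x)) μ) :
    ContDiff ℝ n fun t => ∫ x, g x * exp (t * a x) ∂μ := by
  refine contDiff_iff_iteratedDeriv.mpr ⟨fun m hm => ?_, fun m hm => ?_⟩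
  · rw [iteratedDeriv_integral_mul_exp hg (by exact_mod_cast hm)]
    exact continuous_integral_mul_exp (hg m (by exact_mod_cast hm))
  · have hm : m < n := by exact_mod_cast hm
    rw [iteratedDeriv_integral_mul_exp hg hm.le]
    refine fun t => (hasDerivAt_integral_mul_exp (hg m hm.le) (fun t => ?_) t).differentiableAt
    simpa only [pow_succ', mul_assoc] using hg (m + 1) hm t

end ExpIntegral

section ExpMoment

variable (r : ℕ) (ρ : ℝ → ℝ)

noncomputable def expMoment (k : ℕ) (x s : ℝ) : ℝ :=
  ∫ l, l ^ k * ρ l * exp (x * l + s * l ^ r)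

variable {r ρ}

lemma integrable_pow_mul_of_integrable_weight {M k : ℕ} (hk : k ≤ M) {f : ℝ → ℝ}
    (hf : AEStronglyMeasurable f) (hw : Integrable fun l => (1 + |l|) ^ M * |f l|) :
    Integrable fun l => l ^ k * f l := by
  refine hw.mono' (by fun_prop) (.of_forall fun l => ?_)
  rw [norm_mul, norm_pow, norm_eq_abs, norm_eq_abs]
  have h1 : 1 ≤ 1 + |l| := le_add_of_nonneg_right (abs_nonneg l)
  gcongr
  exact (pow_le_pow_left₀ (abs_nonneg l) (by linarith) k).trans (pow_le_pow_right₀ h1 hk)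

lemma integrable_expMoment_integrand_of_weight {M : ℕ} (hρ : Measurable ρ)
    (hint : ∀ x s : ℝ, Integrable fun l => (1 + |l|) ^ M * |ρ l| * exp (x * l + s * l ^ r))
    {k : ℕ} (hk : k ≤ M) (x s : ℝ) :
    Integrable fun l => l ^ k * ρ l * exp (x * l + s * l ^ r) := by
  have := integrable_pow_mul_of_integrable_weight hk (f := fun l => ρ l * exp (x * l + s * l ^ r))
    (by fun_prop) (by simpa only [abs_mul, abs_exp, mul_assoc] using hint x s)
  simpa only [mul_assoc] using this

lemma expMoment_eq_integral_mul_exp_s (k : ℕ) (x : ℝ) :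
    expMoment r ρ k x = fun s => ∫ l, l ^ k * ρ l * exp (x * l) * exp (s * l ^ r) := by
  ext s
  simp only [expMoment, exp_add, mul_assoc]

lemma expMoment_eq_integral_mul_exp_x (k : ℕ) (s : ℝ) :
    (fun x => expMoment r ρ k x s) = fun x => ∫ l, l ^ k * ρ l * exp (s * l ^ r) * exp (x * l) := by
  ext x
  simp only [expMoment, exp_add]
  congr with l
  ring

lemma expMoment_integrand_s_eq (k j : ℕ) (x s l : ℝ) :
    (l ^ r) ^ j * (l ^ k * ρ l * exp (x * l)) * exp (s * l ^ r) =
      l ^ (k + r * j) * ρ l * exp (x * l + s * l ^ r) := by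
  rw [exp_add, pow_add, pow_mul]; ring

lemma expMoment_integrand_x_eq (k i : ℕ) (x s l : ℝ) :
    l ^ i * (l ^ k * ρ l * exp (s * l ^ r)) * exp (x * l) =
      l ^ (k + i) * ρ l * exp (x * l + s * l ^ r) := by
  rw [exp_add, pow_add]; ring

variable {M : ℕ}

lemma integrable_expMoment_integrand_s
    (hmom : ∀ k ≤ M, ∀ x s : ℝ, Integrable fun l => l ^ k * ρ l * exp (x * l + s * l ^ r))
    {k n : ℕ} (h : k + r * n ≤ M) (x : ℝ) :
    ∀ j ≤ n, ∀ t,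
      Integrable fun l => (l ^ r) ^ j * (l ^ k * ρ l * exp (x * l)) * exp (t * l ^ r) := by
  intro j hj t
  simp only [expMoment_integrand_s_eq]
  exact hmom _ (le_trans (by gcongr) h) x t

lemma integrable_expMoment_integrand_x
    (hmom : ∀ k ≤ M, ∀ x s : ℝ, Integrable fun l => l ^ k * ρ l * exp (x * l + s * l ^ r))
    {k n : ℕ} (h : k + n ≤ M) (s : ℝ) :
    ∀ i ≤ n, ∀ t, Integrable fun l => l ^ i * (l ^ k * ρ l * exp (s * l ^ r)) * exp (t * l) := by
  intro i hi t
  simp only [expMoment_integrand_x_eq]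
  exact hmom _ (by omega) t s

lemma iteratedDeriv_expMoment_s
    (hmom : ∀ k ≤ M, ∀ x s : ℝ, Integrable fun l => l ^ k * ρ l * exp (x * l + s * l ^ r))
    {k n : ℕ} (h : k + r * n ≤ M) (x : ℝ) {j : ℕ} (hj : j ≤ n) :
    iteratedDeriv j (expMoment r ρ k x) = expMoment r ρ (k + r * j) x := by
  rw [expMoment_eq_integral_mul_exp_s,
    iteratedDeriv_integral_mul_exp (a := (· ^ r)) (integrable_expMoment_integrand_s hmom h x) hj]
  simp only [expMoment_integrand_s_eq]
  rfl

lemma contDiff_expMoment_s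
    (hmom : ∀ k ≤ M, ∀ x s : ℝ, Integrable fun l => l ^ k * ρ l * exp (x * l + s * l ^ r))
    {k n : ℕ} (h : k + r * n ≤ M) (x : ℝ) :
    ContDiff ℝ n (expMoment r ρ k x) := by
  rw [expMoment_eq_integral_mul_exp_s]
  exact contDiff_integral_mul_exp (a := (· ^ r)) (integrable_expMoment_integrand_s hmom h x)

lemma iteratedDeriv_expMoment_x
    (hmom : ∀ k ≤ M, ∀ x s : ℝ, Integrable fun l => l ^ k * ρ l * exp (x * l + s * l ^ r))
    {k n : ℕ} (h : k + n ≤ M) (s : ℝ) {i : ℕ} (hi : i ≤ n) :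
    iteratedDeriv i (fun x => expMoment r ρ k x s) = fun x => expMoment r ρ (k + i) x s := by
  rw [expMoment_eq_integral_mul_exp_x,
    iteratedDeriv_integral_mul_exp (a := fun l => l) (integrable_expMoment_integrand_x hmom h s) hi]
  simp only [expMoment_integrand_x_eq]
  rfl

lemma contDiff_expMoment_x
    (hmom : ∀ k ≤ M, ∀ x s : ℝ, Integrable fun l => l ^ k * ρ l * exp (x * l + s * l ^ r))
    {k n : ℕ} (h : k + n ≤ M) (s : ℝ) :
    ContDiff ℝ n fun x => expMoment r ρ k x s := by
  rw [expMoment_eq_integral_mul_exp_x]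
  exact contDiff_integral_mul_exp (a := fun l => l) (integrable_expMoment_integrand_x hmom h s)

end ExpMoment

section Andreief

open Matrix Equiv

lemma det_mul_prod_eq_sum {α : Type*} {N : ℕ} (f g : Fin N → α → ℝ) (x : Fin N → α) :
    det (of fun i k => f i (x k)) * ∏ k, g k (x k) =
      ∑ σ : Perm (Fin N), (Perm.sign σ : ℝ) * ∏ k, f (σ k) (x k) * g k (x k) := by
  simp only [det_apply', of_apply, Finset.sum_mul, Finset.prod_mul_distrib, mul_assoc]

variable {α : Type*} [MeasurableSpace α] {μ : Measure α} [SigmaFinite μ] {N : ℕ}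
  {f g : Fin N → α → ℝ}

lemma integrable_det_mul_prod (hfg : ∀ i j, Integrable (fun x => f i x * g j x) μ) :
    Integrable (fun x : Fin N → α => det (of fun i k => f i (x k)) * ∏ k, g k (x k))
      (Measure.pi fun _ => μ) := by
  simp only [det_mul_prod_eq_sum]
  exact integrable_finsetSum _ fun σ _ =>
    (Integrable.fintype_prod (f := fun k y => f (σ k) y * g k y) fun k => hfg _ _).const_mul _

lemma det_integral_mul_eq_integral_det_mul_prod
    (hfg : ∀ i j, Integrable (fun x => f i x * g j x) μ) :
    det (of fun i j => ∫ x, f i x * g j x ∂μ) =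
      ∫ x, det (of fun i k => f i (x k)) * ∏ k, g k (x k) ∂(Measure.pi fun _ => μ) := by
  simp only [det_mul_prod_eq_sum]
  rw [integral_finsetSum _ fun σ _ =>
    (Integrable.fintype_prod (f := fun k y => f (σ k) y * g k y) fun k => hfg _ _).const_mul _]
  simp only [det_apply', of_apply, integral_const_mul]
  refine Finset.sum_congr rfl fun σ _ => ?_
  rw [integral_fintype_prod_eq_prod (f := fun k y => f (σ k) y * g k y)]

theorem det_integral_mul_eq_integral_det_mul_det
    (hfg : ∀ i j, Integrable (fun x => f i x * g j x) μ) :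
    det (of fun i j => ∫ x, f i x * g j x ∂μ) = (N.factorial : ℝ)⁻¹ *
      ∫ x, det (of fun i k => f i (x k)) * det (of fun j k => g j (x k))
        ∂(Measure.pi fun _ => μ) := by
  set A := of fun i j => ∫ x, f i x * g j x ∂μ
  have hperm (τ : Perm (Fin N)) : (Perm.sign τ : ℝ) * det A =
      ∫ x, det (of fun i k => f i (x k)) * ∏ k, g (τ k) (x k) ∂(Measure.pi fun _ => μ) := by
    rw [← det_permute']
    exact det_integral_mul_eq_integral_det_mul_prod fun i j => hfg i (τ j)
  have hsign (τ : Perm (Fin N)) : (Perm.sign τ : ℝ) * (Perm.sign τ : ℝ) = 1 := by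
    rw [← Int.cast_mul, ← Units.val_mul, Int.units_mul_self, Units.val_one, Int.cast_one]
  have hfact : (N.factorial : ℝ) * det A =
      ∑ τ : Perm (Fin N), (Perm.sign τ : ℝ) * ((Perm.sign τ : ℝ) * det A) := by
    simp only [← mul_assoc, hsign, one_mul, Finset.sum_const, Finset.card_univ,
      Fintype.card_perm, Fintype.card_fin, nsmul_eq_mul]
  -- Summing the column permutations of `A` against their signs antisymmetrizes
  -- `∏ k, g k (x k)` into `det (of fun j k => g j (x k))`.
  rw [eq_inv_mul_iff_mul_eq₀ (by positivity), hfact]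
  simp only [hperm, ← integral_const_mul, det_apply' (of fun j k => g j _), of_apply,
    Finset.mul_sum]
  rw [← integral_finsetSum _ fun τ _ =>
    (integrable_det_mul_prod fun i j => hfg i (τ j)).const_mul _]
  congr with x
  exact Finset.sum_congr rfl fun τ _ => by ring

end Andreief

lemma add_mul_le_pred_mul_succ {N r i j : ℕ} (hi : i ≤ N - 1) (hj : j ≤ N - 1) :
    i + r * j ≤ (N - 1) * (r + 1) :=
  calc i + r * j ≤ (N - 1) + r * (N - 1) := by gcongr
    _ = (N - 1) * (r + 1) := by ring

section EigenvalueIntegral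

open Matrix

lemma det_pow_mul_det_pow_mul {N : ℕ} (r : ℕ) (w : ℝ → ℝ) (lam : Fin N → ℝ) :
    det (of fun i k : Fin N => lam k ^ (i : ℕ)) *
        det (of fun j k : Fin N => lam k ^ (r * j) * w (lam k)) =
      (∏ i, ∏ j ∈ Finset.Ioi i, ((lam j - lam i) * (lam j ^ r - lam i ^ r))) *
        ∏ k, w (lam k) := by
  have hV : det (of fun i k : Fin N => lam k ^ (i : ℕ)) = det (vandermonde lam)ᵀ := rfl
  have hW : (of fun j k : Fin N => lam k ^ (r * j) * w (lam k)) =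
      of fun j k => w (lam k) * (vandermonde fun k => lam k ^ r)ᵀ j k := by
    ext j k
    simp only [of_apply, transpose_apply, vandermonde_apply, pow_mul, mul_comm]
  rw [hV, hW, det_mul_row, det_transpose, det_transpose, det_vandermonde, det_vandermonde]
  simp only [Finset.prod_mul_distrib]
  ring

lemma det_expMoment {N r : ℕ} {ρ : ℝ → ℝ}
    (hmom : ∀ k ≤ (N - 1) * (r + 1), ∀ x s : ℝ,
      Integrable fun l => l ^ k * ρ l * exp (x * l + s * l ^ r)) (x s : ℝ) :
    det (of fun i j : Fin N => expMoment r ρ (i + r * j) x s) =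
      (N.factorial : ℝ)⁻¹ * ∫ lam : Fin N → ℝ,
        (∏ i, ∏ j ∈ Finset.Ioi i, ((lam j - lam i) * (lam j ^ r - lam i ^ r))) *
          ∏ k, (ρ (lam k) * exp (x * lam k + s * lam k ^ r)) := by
  have hentry (i j : Fin N) (l : ℝ) : l ^ (i + r * j) * ρ l * exp (x * l + s * l ^ r) =
      l ^ (i : ℕ) * (l ^ (r * j) * (ρ l * exp (x * l + s * l ^ r))) := by
    rw [pow_add]; ring
  have hmom' (i j : Fin N) : Integrable fun l =>
      l ^ (i : ℕ) * (l ^ (r * j) * (ρ l * exp (x * l + s * l ^ r))) := by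
    simp only [← hentry]
    exact hmom _ (add_mul_le_pred_mul_succ (by omega) (by omega)) x s
  simp only [expMoment, hentry, det_integral_mul_eq_integral_det_mul_det hmom', volume_pi,
    det_pow_mul_det_pow_mul r fun l => ρ l * exp (x * l + s * l ^ r)]

end EigenvalueIntegral

theorem stmt7_general (N r : ℕ) (ρ : ℝ → ℝ) (hρ : Measurable ρ)
    (hint : ∀ x s : ℝ, Integrable (fun l : ℝ =>
      (1 + |l|) ^ ((N - 1) * (r + 1)) * |ρ l| * Real.exp (x * l + s * l ^ r)))
    (Φ : ℝ → ℝ → ℝ)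
    (hΦ : ∀ x s, Φ x s = ∫ l : ℝ, ρ l * Real.exp (x * l + s * l ^ r)) :
    (∀ x : ℝ, ContDiff ℝ ((N - 1 : ℕ) : ℕ∞) (fun s => Φ x s)) ∧
    (∀ j : ℕ, j ≤ N - 1 → ∀ s : ℝ,
      ContDiff ℝ ((N - 1 : ℕ) : ℕ∞)
        (fun x => iteratedDeriv j (fun s' => Φ x s') s)) ∧
    (∀ i j : ℕ, i ≤ N - 1 → j ≤ N - 1 → ∀ x s : ℝ,
      iteratedDeriv i (fun x' => iteratedDeriv j (fun s' => Φ x' s') s) x =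
        ∫ l : ℝ, l ^ (i + r * j) * ρ l * Real.exp (x * l + s * l ^ r)) ∧
    (∀ x s : ℝ,
      Matrix.det (Matrix.of fun i j : Fin N =>
        iteratedDeriv (i : ℕ)
          (fun x' => iteratedDeriv (j : ℕ) (fun s' => Φ x' s') s) x) =
      (1 / (N.factorial : ℝ)) *
        ∫ lam : Fin N → ℝ,
          (∏ i : Fin N, ∏ j ∈ Finset.Ioi i,
            ((lam j - lam i) * (lam j ^ r - lam i ^ r))) *
          ∏ k : Fin N, (ρ (lam k) * Real.exp (x * lam k + s * lam k ^ r))) := by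
  have hmom : ∀ k ≤ (N - 1) * (r + 1), ∀ x s : ℝ,
      Integrable fun l => l ^ k * ρ l * exp (x * l + s * l ^ r) :=
    fun k hk => integrable_expMoment_integrand_of_weight hρ hint hk
  have hs_bound : 0 + r * (N - 1) ≤ (N - 1) * (r + 1) :=
    add_mul_le_pred_mul_succ (Nat.zero_le _) le_rfl
  have hx_bound {j : ℕ} (hj : j ≤ N - 1) : r * j + (N - 1) ≤ (N - 1) * (r + 1) :=
    (add_comm _ _).trans_le (add_mul_le_pred_mul_succ le_rfl hj)
  have hΦ' : Φ = expMoment r ρ 0 := by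
    ext x s
    simp only [hΦ, expMoment, pow_zero, one_mul]
  have hs (j : ℕ) (hj : j ≤ N - 1) (x : ℝ) :
      iteratedDeriv j (fun s => Φ x s) = expMoment r ρ (r * j) x := by
    simpa only [hΦ', zero_add] using iteratedDeriv_expMoment_s hmom hs_bound x hj
  have hxs (i j : ℕ) (hi : i ≤ N - 1) (hj : j ≤ N - 1) (x s : ℝ) :
      iteratedDeriv i (fun x' => iteratedDeriv j (fun s' => Φ x' s') s) x =
        expMoment r ρ (i + r * j) x s := by
    simp only [hs j hj]
    rw [iteratedDeriv_expMoment_x hmom (hx_bound hj) s hi, add_comm]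
  refine ⟨fun x => ?_, fun j hj s => ?_, hxs, fun x s => ?_⟩
  · rw [hΦ']
    exact contDiff_expMoment_s hmom hs_bound x
  · simp only [hs j hj]
    exact contDiff_expMoment_x hmom (hx_bound hj) s
  · rw [one_div, ← det_expMoment hmom]
    congr with i j
    exact hxs i j (by omega) (by omega) x s

theorem stmt7 (N r : ℕ) (hN : 1 ≤ N) (hr : 1 ≤ r) (ρ : ℝ → ℝ) (hρ : Measurable ρ)
    (hint : ∀ x s : ℝ, Integrable (fun l : ℝ =>
      (1 + |l|) ^ ((N - 1) * (r + 1)) * |ρ l| * Real.exp (x * l + s * l ^ r)))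
    (Φ : ℝ → ℝ → ℝ)
    (hΦ : ∀ x s, Φ x s = ∫ l : ℝ, ρ l * Real.exp (x * l + s * l ^ r)) :
    (∀ x : ℝ, ContDiff ℝ ((N - 1 : ℕ) : ℕ∞) (fun s => Φ x s)) ∧
    (∀ j : ℕ, j ≤ N - 1 → ∀ s : ℝ,
      ContDiff ℝ ((N - 1 : ℕ) : ℕ∞)
        (fun x => iteratedDeriv j (fun s' => Φ x s') s)) ∧
    (∀ i j : ℕ, i ≤ N - 1 → j ≤ N - 1 → ∀ x s : ℝ,
      iteratedDeriv i (fun x' => iteratedDeriv j (fun s' => Φ x' s') s) x =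
        ∫ l : ℝ, l ^ (i + r * j) * ρ l * Real.exp (x * l + s * l ^ r)) ∧
    (∀ x s : ℝ,
      Matrix.det (Matrix.of fun i j : Fin N =>
        iteratedDeriv (i : ℕ)
          (fun x' => iteratedDeriv (j : ℕ) (fun s' => Φ x' s') s) x) =
      (1 / (N.factorial : ℝ)) *
        ∫ lam : Fin N → ℝ,
          (∏ i : Fin N, ∏ j ∈ Finset.Ioi i,
            ((lam j - lam i) * (lam j ^ r - lam i ^ r))) *
          ∏ k : Fin N, (ρ (lam k) * Real.exp (x * lam k + s * lam k ^ r))) :=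
  stmt7_general N r ρ hρ hint Φ hΦ
end

section
/- Let K ≥ 1, let λ_1,…,λ_K and c_1,…,c_K be real numbers, and define φ(x) := Σ_{r=1}^K c_r e^{λ_r x}. Then for every x ∈ ℝ, det( φ^{(i+j−2)}(x) )_{i,j=1,…,K} = ( ∏_{1≤j<i≤K} (λ_i − λ_j)^2 ) · ∏_{r=1}^K c_r e^{λ_r x}. (This expresses the multi-soliton Wronskian tau-function W_K[φ, φ′, …, φ^{(K−1)}] of the generalized Burgers–Hopf hierarchy in product form.) -/
/-!
The `n`-th derivative of `φ = ∑ c_r e^{λ_r x}` is `∑ c_r λ_r^n e^{λ_r x}`, so the Wronskian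
matrix `(φ^{(i+j)}(x))` is the Hankel matrix of the moments of the weights
`w_r = c_r e^{λ_r x}` at the nodes `λ_r`. That matrix factors as `Vᵀ · diag w · V` with `V` the
Vandermonde matrix of the `λ_r`, and the determinant is `det(V)² · ∏ w_r`.
-/

open Matrix Finset

theorem iteratedDeriv_sum_mul_exp {ι : Type*} (s : Finset ι) (c lam : ι → ℝ) (n : ℕ) (x : ℝ) :
    iteratedDeriv n (fun y => ∑ r ∈ s, c r * Real.exp (lam r * y)) x =
      ∑ r ∈ s, c r * lam r ^ n * Real.exp (lam r * x) := by
  rw [iteratedDeriv_fun_sum fun r _ => by fun_prop]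
  refine sum_congr rfl fun r _ => ?_
  rw [iteratedDeriv_const_mul_field, iteratedDeriv_exp_const_mul, mul_assoc]

section Hankel

variable {R : Type*} [CommRing R] {n : ℕ}

theorem of_sum_mul_pow_add_eq_vandermonde_transpose_mul (v w : Fin n → R) :
    (of fun i j : Fin n => ∑ r, w r * v r ^ ((i : ℕ) + j)) =
      (vandermonde v)ᵀ * diagonal w * vandermonde v := by
  ext i j
  rw [mul_apply]
  simp only [of_apply, mul_diagonal, transpose_apply, vandermonde_apply, pow_add]
  exact sum_congr rfl fun r _ => by ring

theorem det_of_sum_mul_pow_add (v w : Fin n → R) :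
    (of fun i j : Fin n => ∑ r, w r * v r ^ ((i : ℕ) + j)).det =
      (∏ i : Fin n, ∏ j ∈ Ioi i, (v j - v i) ^ 2) * ∏ r, w r := by
  rw [of_sum_mul_pow_add_eq_vandermonde_transpose_mul, det_mul, det_mul, det_transpose,
    det_diagonal, det_vandermonde]
  simp only [pow_two, prod_mul_distrib]
  ring

end Hankel

theorem stmt8_general (K : ℕ) (lam c : Fin K → ℝ)
    (φ : ℝ → ℝ) (hφ : ∀ x, φ x = ∑ r : Fin K, c r * Real.exp (lam r * x)) :
    ∀ x : ℝ,
      Matrix.det (Matrix.of fun i j : Fin K =>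
        iteratedDeriv ((i : ℕ) + (j : ℕ)) φ x) =
      (∏ i : Fin K, ∏ j ∈ Finset.Ioi i, (lam j - lam i) ^ 2) *
        ∏ r : Fin K, c r * Real.exp (lam r * x) := by
  intro x
  obtain rfl : φ = fun y => ∑ r, c r * Real.exp (lam r * y) := funext hφ
  simp only [iteratedDeriv_sum_mul_exp, mul_right_comm (c _) (lam _ ^ _)]
  exact det_of_sum_mul_pow_add lam fun r => c r * Real.exp (lam r * x)

theorem stmt8 (K : ℕ) (hK : 1 ≤ K) (lam c : Fin K → ℝ)
    (φ : ℝ → ℝ) (hφ : ∀ x, φ x = ∑ r : Fin K, c r * Real.exp (lam r * x)) :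
    ∀ x : ℝ,
      Matrix.det (Matrix.of fun i j : Fin K =>
        iteratedDeriv ((i : ℕ) + (j : ℕ)) φ x) =
      (∏ i : Fin K, ∏ j ∈ Finset.Ioi i, (lam j - lam i) ^ 2) *
        ∏ r : Fin K, c r * Real.exp (lam r * x) :=
  stmt8_general K lam c φ hφ
end

section
/- Let k ≥ 1 and let ψ_1,…,ψ_k be smooth real-valued functions on an open interval I such that every Wronskian W_j(x) := det( ψ_m^{(i−1)}(x) )_{i,m=1,…,j} (with W_0 := 1) is nonvanishing on I for j = 1,…,k. Define the first-order operators T_j by (T_j g)(x) := g′(x) + (d/dx)[ ln( W_{j−1}(x)/W_j(x) ) ] · g(x). Then for every smooth function f on I and every x ∈ I: (T_k ∘ T_{k−1} ∘ ⋯ ∘ T_1 f)(x) = W[ψ_1,…,ψ_k,f](x) / W_k(x), where W[ψ_1,…,ψ_k,f] denotes the (k+1)×(k+1) Wronskian of ψ_1,…,ψ_k,f. (This is the Wronskian composition formula underlying iterated Darboux–Bäcklund transformations.) -/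
/-- The `j × j` Wronskian `W_j = W[ψ₁,…,ψ_j]` of the first `j` functions of the
family `ψ` (indexed from `0`); the `(i,l)` entry is the `(i-1)`-st derivative of
`ψ_l`.  `Wr ψ 0 = 1`. -/
noncomputable def Wr (ψ : ℕ → ℝ → ℝ) (j : ℕ) (x : ℝ) : ℝ :=
  Matrix.det (Matrix.of fun i l : Fin j => iteratedDeriv (i : ℕ) (ψ (l : ℕ)) x)

/-- The first-order Darboux operator `T_j g = g′ + (ln (W_{j-1}/W_j))′ · g`. -/
noncomputable def DBop (ψ : ℕ → ℝ → ℝ) (j : ℕ) (g : ℝ → ℝ) : ℝ → ℝ :=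
  fun x => deriv g x + deriv (fun y => Real.log (Wr ψ (j - 1) y / Wr ψ j y)) x * g x

/-- The composition `T_j ∘ T_{j-1} ∘ ⋯ ∘ T_1`. -/
noncomputable def iterDB (ψ : ℕ → ℝ → ℝ) : ℕ → (ℝ → ℝ) → (ℝ → ℝ)
  | 0, f => f
  | j + 1, f => DBop ψ (j + 1) (iterDB ψ j f)



private lemma hasDerivAt_det_aux {n : ℕ} {M : ℝ → Matrix (Fin n) (Fin n) ℝ}
    {N : Matrix (Fin n) (Fin n) ℝ} {x : ℝ}
    (h : ∀ i j, HasDerivAt (fun y => M y i j) (N i j) x) :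
    HasDerivAt (fun y => (M y).det)
      (∑ r : Fin n, (Matrix.updateRow (M x) r (N r)).det) x := by
  have key : HasDerivAt (fun y => (M y).det)
      (∑ σ : Equiv.Perm (Fin n), ((Equiv.Perm.sign σ : ℤ) : ℝ) *
        ∑ c : Fin n, (∏ i ∈ Finset.univ.erase c, M x (σ i) i) • N (σ c) c) x := by
    simp only [Matrix.det_apply']
    apply HasDerivAt.fun_sum
    intro σ _
    exact (HasDerivAt.fun_finsetProd (u := Finset.univ) (x := x)
      (f := fun i y => M y (σ i) i) (f' := fun i => N (σ i) i)
      (fun i _ => h (σ i) i)).const_mul _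
  convert key using 1
  simp only [Matrix.det_apply']
  rw [Finset.sum_comm]
  refine Finset.sum_congr rfl fun σ _ => ?_
  rw [Finset.mul_sum]
  refine (Fintype.sum_equiv σ _ _ fun c => ?_).symm
  congr 1
  rw [← Finset.mul_prod_erase (Finset.univ) _ (Finset.mem_univ c)]
  simp only [smul_eq_mul, Matrix.updateRow_apply, if_pos rfl]
  rw [mul_comm]
  congr 1
  refine Finset.prod_congr rfl fun i hi => ?_
  rw [if_neg]
  exact fun hh => (Finset.mem_erase.1 hi).1 (σ.injective hh)


private lemma contDiffOn_iteratedDeriv {f : ℝ → ℝ} {I : Set ℝ} (hI : IsOpen I)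
    (hf : ContDiffOn ℝ (⊤ : ℕ∞) f I) (m : ℕ) : ContDiffOn ℝ (⊤ : ℕ∞) (iteratedDeriv m f) I := by
  induction m with
  | zero => simpa [iteratedDeriv_zero] using hf
  | succ m ih => rw [iteratedDeriv_succ]; exact ih.deriv_of_isOpen hI (by simp)

private lemma hasDerivAt_iteratedDeriv {f : ℝ → ℝ} {I : Set ℝ} (hI : IsOpen I)
    (hf : ContDiffOn ℝ (⊤ : ℕ∞) f I) (m : ℕ) {x : ℝ} (hx : x ∈ I) :
    HasDerivAt (iteratedDeriv m f) (iteratedDeriv (m + 1) f x) x := by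
  have hd : DifferentiableAt ℝ (iteratedDeriv m f) x :=
    ((contDiffOn_iteratedDeriv hI hf m).differentiableOn (by simp)).differentiableAt
      (hI.mem_nhds hx)
  have := hd.hasDerivAt
  rwa [show deriv (iteratedDeriv m f) x = iteratedDeriv (m + 1) f x by
    rw [iteratedDeriv_succ]] at this


private lemma det_block {n m : ℕ} (M : Matrix (Fin (n + m)) (Fin (n + m)) ℝ)
    (A : Matrix (Fin n) (Fin n) ℝ) [Invertible A]
    (B : Matrix (Fin n) (Fin m) ℝ) (C : Matrix (Fin m) (Fin n) ℝ)
    (D : Matrix (Fin m) (Fin m) ℝ)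
    (hA : ∀ i l, M (Fin.castAdd m i) (Fin.castAdd m l) = A i l)
    (hB : ∀ i r, M (Fin.castAdd m i) (Fin.natAdd n r) = B i r)
    (hC : ∀ r l, M (Fin.natAdd n r) (Fin.castAdd m l) = C r l)
    (hD : ∀ r s, M (Fin.natAdd n r) (Fin.natAdd n s) = D r s) :
    M.det = A.det * (D - C * ⅟A * B).det := by
  rw [← Matrix.det_submatrix_equiv_self finSumFinEquiv M]
  have : M.submatrix finSumFinEquiv finSumFinEquiv = Matrix.fromBlocks A B C D := by
    ext i l
    rcases i with i | i <;> rcases l with l | l <;>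
      simp [Matrix.submatrix_apply, finSumFinEquiv, hA, hB, hC, hD]
  rw [this, Matrix.det_fromBlocks₁₁]

/-- derivative of a Wronskian-type determinant: bump the last row. -/
private lemma hasDerivAt_wdet {n : ℕ} {v : Fin (n + 1) → ℝ → ℝ} {I : Set ℝ}
    (hI : IsOpen I) (hv : ∀ l, ContDiffOn ℝ (⊤ : ℕ∞) (v l) I) {x : ℝ} (hx : x ∈ I) :
    HasDerivAt
      (fun y => Matrix.det (Matrix.of fun i l : Fin (n + 1) => iteratedDeriv (i : ℕ) (v l) y))
      (Matrix.det (Matrix.of fun i l : Fin (n + 1) =>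
        iteratedDeriv (if (i : ℕ) = n then n + 1 else (i : ℕ)) (v l) x)) x := by
  have h := hasDerivAt_det_aux
    (M := fun y => Matrix.of fun i l : Fin (n + 1) => iteratedDeriv (i : ℕ) (v l) y)
    (N := Matrix.of fun i l : Fin (n + 1) => iteratedDeriv ((i : ℕ) + 1) (v l) x) (x := x)
    (fun i j => hasDerivAt_iteratedDeriv hI (hv j) i hx)
  convert h using 1
  rw [Finset.sum_eq_single_of_mem (Fin.last n) (Finset.mem_univ _)]
  · congr 1
    ext i l
    by_cases hi : i = Fin.last n
    · subst hi
      simp [Matrix.updateRow_self, Fin.val_last]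
    · have : (i : ℕ) ≠ n := fun hh => hi (Fin.ext (by simp [hh, Fin.val_last]))
      simp [Matrix.updateRow_ne hi, this]
  · intro r _ hr
    have hrn : (r : ℕ) < n := by
      rcases Fin.lt_last_iff_ne_last.2 hr with h'
      exact h'
    set r1 : Fin (n + 1) := ⟨(r : ℕ) + 1, by omega⟩ with hr1
    apply Matrix.det_zero_of_row_eq (i := r) (j := r1)
    · intro hh; apply absurd (congrArg Fin.val hh); simp [hr1]
    · ext l
      have hne : r1 ≠ r := by
        intro hh; apply absurd (congrArg Fin.val hh); simp [hr1]
      simp [Matrix.updateRow_self, Matrix.updateRow_ne hne, hr1, Matrix.updateRow_apply, Fin.ext_iff]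

noncomputable def VV (ψ : ℕ → ℝ → ℝ) (f : ℝ → ℝ) (j : ℕ) (x : ℝ) : ℝ :=
  Matrix.det (Matrix.of fun i l : Fin (j + 1) =>
    iteratedDeriv (i : ℕ)
      ((Fin.snoc (fun m : Fin j => ψ (m : ℕ)) f : Fin (j + 1) → ℝ → ℝ) l) x)

noncomputable def Vbb (ψ : ℕ → ℝ → ℝ) (f : ℝ → ℝ) (j : ℕ) (x : ℝ) : ℝ :=
  Matrix.det (Matrix.of fun i l : Fin (j + 1) =>
    iteratedDeriv (if (i : ℕ) = j then j + 1 else (i : ℕ))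
      ((Fin.snoc (fun m : Fin j => ψ (m : ℕ)) f : Fin (j + 1) → ℝ → ℝ) l) x)

noncomputable def Wbs (ψ : ℕ → ℝ → ℝ) (n : ℕ) (x : ℝ) : ℝ :=
  Matrix.det (Matrix.of fun i l : Fin (n + 1) =>
    iteratedDeriv (if (i : ℕ) = n then n + 1 else (i : ℕ)) (ψ (l : ℕ)) x)


private lemma mul3_entry {n p q : ℕ} (E : Matrix (Fin n) (Fin n) ℝ)
    (c b : Fin n → ℝ) (C : Matrix (Fin p) (Fin n) ℝ) (B : Matrix (Fin n) (Fin q) ℝ)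
    (r : Fin p) (s : Fin q) (hC : ∀ l, C r l = c l) (hB : ∀ i, B i s = b i) :
    (C * E * B) r s = ∑ j, (∑ i, c i * E i j) * b j := by
  simp only [Matrix.mul_apply, hB]
  refine Finset.sum_congr rfl fun j _ => ?_
  congr 1
  exact Finset.sum_congr rfl fun i _ => by rw [hC]

private lemma jacobi (ψ : ℕ → ℝ → ℝ) (f : ℝ → ℝ) (n : ℕ) (x : ℝ)
    (hA : Wr ψ n x ≠ 0) :
    VV ψ f (n + 1) x * Wr ψ n x
      = Vbb ψ f n x * Wr ψ (n + 1) x - Wbs ψ n x * VV ψ f n x := by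
  classical
  set A : Matrix (Fin n) (Fin n) ℝ :=
    Matrix.of (fun i l : Fin n => iteratedDeriv (i : ℕ) (ψ (l : ℕ)) x) with hAdef
  have hdetA : A.det ≠ 0 := hA
  haveI : Invertible A := A.invertibleOfIsUnitDet (isUnit_iff_ne_zero.mpr hdetA)
  set E := ⅟A with hE
  -- auxiliary vectors
  set c0 : Fin n → ℝ := fun l => iteratedDeriv n (ψ (l : ℕ)) x with hc0
  set c1 : Fin n → ℝ := fun l => iteratedDeriv (n + 1) (ψ (l : ℕ)) x with hc1
  set b0 : Fin n → ℝ := fun i => iteratedDeriv (i : ℕ) (ψ n) x with hb0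
  set b1 : Fin n → ℝ := fun i => iteratedDeriv (i : ℕ) f x with hb1
  set e : Fin 2 → Fin 2 → ℝ := fun r s =>
    ∑ j, (∑ i, (if r = 0 then c0 else c1) i * E i j) * (if s = 0 then b0 else b1) j with he
  -- (1) W_{n+1}
  have h1 : Wr ψ (n + 1) x = A.det * (iteratedDeriv n (ψ n) x - e 0 0) := by
    rw [show Wr ψ (n+1) x = Matrix.det (Matrix.of fun i l : Fin (n+1) =>
        iteratedDeriv (i : ℕ) (ψ (l : ℕ)) x) from rfl]
    rw [det_block _ A (Matrix.of fun i (_ : Fin 1) => b0 i)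
      (Matrix.of fun (_ : Fin 1) l => c0 l) (Matrix.of fun _ _ => iteratedDeriv n (ψ n) x)
      (fun i l => by simp [hAdef]) (by intro i r; simp [hb0]) (by intro r l; simp [hc0])
      (by intro r s; simp)]
    congr 1
    rw [Matrix.det_fin_one, Matrix.sub_apply, mul3_entry E c0 b0 _ _ 0 0
      (fun l => rfl) (fun i => rfl)]
    simp [he]
  -- (2) V_n
  have h2 : VV ψ f n x = A.det * (iteratedDeriv n f x - e 0 1) := by
    rw [show VV ψ f n x = Matrix.det (Matrix.of fun i l : Fin (n+1) =>
        iteratedDeriv (i : ℕ)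
          ((Fin.snoc (fun m : Fin n => ψ (m : ℕ)) f : Fin (n+1) → ℝ → ℝ) l) x) from rfl]
    rw [det_block _ A (Matrix.of fun i (_ : Fin 1) => b1 i)
      (Matrix.of fun (_ : Fin 1) l => c0 l) (Matrix.of fun _ _ => iteratedDeriv n f x)
      (fun i l => by simp [Fin.snoc, Fin.is_lt, hAdef])
      (by intro i r; simp [Fin.snoc, hb1])
      (by intro r l; simp [Fin.snoc, Fin.is_lt, hc0])
      (by intro r s; simp [Fin.snoc])]
    congr 1
    rw [Matrix.det_fin_one, Matrix.sub_apply, mul3_entry E c0 b1 _ _ 0 0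
      (fun l => rfl) (fun i => rfl)]
    simp [he]
  -- (3) W'_{n+1}
  have h3 : Wbs ψ n x = A.det * (iteratedDeriv (n + 1) (ψ n) x - e 1 0) := by
    rw [show Wbs ψ n x = Matrix.det (Matrix.of fun i l : Fin (n+1) =>
        iteratedDeriv (if (i : ℕ) = n then n + 1 else (i : ℕ)) (ψ (l : ℕ)) x) from rfl]
    rw [det_block _ A (Matrix.of fun i (_ : Fin 1) => b0 i)
      (Matrix.of fun (_ : Fin 1) l => c1 l)
      (Matrix.of fun _ _ => iteratedDeriv (n + 1) (ψ n) x)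
      (fun i l => by
        have : (i : ℕ) ≠ n := by have := i.is_lt; omega
        simp [this, hAdef])
      (by intro i r
          have : (i : ℕ) ≠ n := by have := i.is_lt; omega
          simp [this, hb0])
      (by intro r l; simp [hc1]) (by intro r s; simp)]
    congr 1
    rw [Matrix.det_fin_one, Matrix.sub_apply, mul3_entry E c1 b0 _ _ 0 0
      (fun l => rfl) (fun i => rfl)]
    simp [he]
  -- (4) V'_n
  have h4 : Vbb ψ f n x = A.det * (iteratedDeriv (n + 1) f x - e 1 1) := by
    rw [show Vbb ψ f n x = Matrix.det (Matrix.of fun i l : Fin (n+1) =>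
        iteratedDeriv (if (i : ℕ) = n then n + 1 else (i : ℕ))
          ((Fin.snoc (fun m : Fin n => ψ (m : ℕ)) f : Fin (n+1) → ℝ → ℝ) l) x) from rfl]
    rw [det_block _ A (Matrix.of fun i (_ : Fin 1) => b1 i)
      (Matrix.of fun (_ : Fin 1) l => c1 l)
      (Matrix.of fun _ _ => iteratedDeriv (n + 1) f x)
      (fun i l => by
        have : (i : ℕ) ≠ n := by have := i.is_lt; omega
        simp [this, Fin.snoc, Fin.is_lt, hAdef])
      (by intro i r
          have : (i : ℕ) ≠ n := by have := i.is_lt; omega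
          simp [this, Fin.snoc, hb1])
      (by intro r l; simp [Fin.snoc, Fin.is_lt, hc1])
      (by intro r s; simp [Fin.snoc])]
    congr 1
    rw [Matrix.det_fin_one, Matrix.sub_apply, mul3_entry E c1 b1 _ _ 0 0
      (fun l => rfl) (fun i => rfl)]
    simp [he]
  -- (5) V_{n+1}
  have h5 : VV ψ f (n + 1) x = A.det *
      ((iteratedDeriv n (ψ n) x - e 0 0) * (iteratedDeriv (n + 1) f x - e 1 1)
        - (iteratedDeriv n f x - e 0 1) * (iteratedDeriv (n + 1) (ψ n) x - e 1 0)) := by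
    rw [show VV ψ f (n + 1) x = Matrix.det (Matrix.of fun i l : Fin (n+2) =>
        iteratedDeriv (i : ℕ)
          ((Fin.snoc (fun m : Fin (n+1) => ψ (m : ℕ)) f : Fin (n+2) → ℝ → ℝ) l) x) from rfl]
    rw [det_block _ A (Matrix.of fun i (s : Fin 2) => (if s = 0 then b0 else b1) i)
      (Matrix.of fun (r : Fin 2) l => (if r = 0 then c0 else c1) l)
      (Matrix.of fun (r s : Fin 2) =>
        iteratedDeriv (n + (r : ℕ)) (if s = 0 then ψ n else f) x)
      (fun i l => by
        simp only [Matrix.of_apply, hAdef]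
        have h1 : ((Fin.castAdd 2 l : Fin (n+2)) : ℕ) = (l : ℕ) := rfl
        simp [Fin.snoc, Fin.castLT, h1])
      (fun i r => by
        fin_cases r <;>
          simp [Fin.snoc, Fin.castLT, hb0, hb1] <;>
          (first | rw [if_pos (by omega : _)] | rw [dif_pos (by omega)]) <;> simp
        )
      (fun r l => by fin_cases r <;> simp [hc0, hc1])
      (fun r s => by
        fin_cases r <;> fin_cases s <;>
          simp [Fin.snoc, Fin.castLT] <;>
          first
            | (rw [if_pos (by omega : _)]; simp)
            | (rw [dif_pos (by omega)]; simp)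
            | rfl)]
    congr 1
    rw [Matrix.det_fin_two]
    simp only [Matrix.sub_apply]
    rw [mul3_entry E c0 b0 _ _ 0 0 (fun l => rfl) (fun i => rfl),
        mul3_entry E c1 b1 _ _ 1 1 (fun l => rfl) (fun i => rfl),
        mul3_entry E c0 b1 _ _ 0 1 (fun l => rfl) (fun i => rfl),
        mul3_entry E c1 b0 _ _ 1 0 (fun l => rfl) (fun i => rfl)]
    simp [he]
  have hWn : Wr ψ n x = A.det := rfl
  rw [h1, h2, h3, h4, h5, hWn]
  ring

theorem stmt9 (k : ℕ) (hk : 1 ≤ k) (I : Set ℝ) (hI : IsOpen I)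
    (ψ : ℕ → ℝ → ℝ) (hψ : ∀ j < k, ContDiffOn ℝ (⊤ : ℕ∞) (ψ j) I)
    (hW : ∀ j : ℕ, 1 ≤ j → j ≤ k → ∀ x ∈ I, Wr ψ j x ≠ 0)
    (f : ℝ → ℝ) (hf : ContDiffOn ℝ (⊤ : ℕ∞) f I) :
    ∀ x ∈ I,
      iterDB ψ k f x =
        Matrix.det (Matrix.of fun i l : Fin (k + 1) =>
          iteratedDeriv (i : ℕ)
            ((Fin.snoc (fun m : Fin k => ψ (m : ℕ)) f : Fin (k + 1) → ℝ → ℝ) l) x) /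
          Wr ψ k x := by
  have key : ∀ j, j ≤ k → ∀ x ∈ I, iterDB ψ j f x = VV ψ f j x / Wr ψ j x := by
    intro j
    induction j with
    | zero =>
      intro _ x hx
      have h1 : Wr ψ 0 x = 1 := Matrix.det_isEmpty
      have h2 : VV ψ f 0 x = f x := by
        rw [VV, Matrix.det_fin_one]
        simp [Fin.snoc]
      simp [iterDB, h1, h2]
    | succ j ih =>
      intro hjk x hx
      have hjk' : j ≤ k := Nat.le_of_succ_le hjk
      have IH := ih hjk'
      -- smoothness of the columns
      have hψ' : ∀ m : ℕ, m < k → ContDiffOn ℝ (⊤ : ℕ∞) (ψ m) I := hψ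
      have hsmψ : ∀ l : Fin (j + 1), ContDiffOn ℝ (⊤ : ℕ∞) (ψ (l : ℕ)) I :=
        fun l => hψ' l (by omega)
      have hsm : ∀ l : Fin (j + 1),
          ContDiffOn ℝ (⊤ : ℕ∞)
            ((Fin.snoc (fun m : Fin j => ψ (m : ℕ)) f : Fin (j + 1) → ℝ → ℝ) l) I := by
        intro l
        induction l using Fin.lastCases with
        | last => simpa [Fin.snoc_last] using hf
        | cast m =>
          have : ((Fin.snoc (fun m : Fin j => ψ (m : ℕ)) f : Fin (j + 1) → ℝ → ℝ))
              m.castSucc = ψ (m : ℕ) := Fin.snoc_castSucc _ _ _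
          rw [this]
          exact hψ' m (by omega)
      -- derivatives
      have hVd : HasDerivAt (fun y => VV ψ f j y) (Vbb ψ f j x) x :=
        hasDerivAt_wdet hI hsm hx
      have hQd : HasDerivAt (fun y => Wr ψ (j + 1) y) (Wbs ψ j x) x :=
        hasDerivAt_wdet hI hsmψ hx
      have hPd : ∃ p, HasDerivAt (fun y => Wr ψ j y) p x := by
        match j, hjk with
        | 0, _ =>
          refine ⟨0, ?_⟩
          have : (fun y => Wr ψ 0 y) = fun _ => (1 : ℝ) :=
            funext fun y => Matrix.det_isEmpty
          rw [this]
          exact hasDerivAt_const x 1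
        | m + 1, hjk =>
          exact ⟨Wbs ψ m x, hasDerivAt_wdet hI (fun l => hψ' l (by omega)) hx⟩
      obtain ⟨p, hPd⟩ := hPd
      have hP0 : Wr ψ j x ≠ 0 := by
        match j with
        | 0 => rw [show Wr ψ 0 x = 1 from Matrix.det_isEmpty]; norm_num
        | m + 1 => exact hW (m + 1) (by omega) (by omega) x hx
      have hQ0 : Wr ψ (j + 1) x ≠ 0 := hW (j + 1) (by omega) hjk x hx
      have hEq : (fun y => iterDB ψ j f y) =ᶠ[nhds x]
          fun y => VV ψ f j y / Wr ψ j y :=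
        Filter.eventuallyEq_of_mem (hI.mem_nhds hx) fun y hy => IH y hy
      have hderiv1 : deriv (iterDB ψ j f) x =
          (Vbb ψ f j x * Wr ψ j x - VV ψ f j x * p) / (Wr ψ j x) ^ 2 := by
        rw [hEq.deriv_eq]
        exact (hVd.div hPd hP0).deriv
      have hlog : deriv (fun y => Real.log (Wr ψ j y / Wr ψ (j + 1) y)) x =
          p / Wr ψ j x - Wbs ψ j x / Wr ψ (j + 1) x := by
        have hdiv : HasDerivAt (fun y => Wr ψ j y / Wr ψ (j + 1) y)
            ((p * Wr ψ (j + 1) x - Wr ψ j x * Wbs ψ j x) / (Wr ψ (j + 1) x) ^ 2) x :=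
          hPd.div hQd hQ0
        have := (hdiv.log (div_ne_zero hP0 hQ0)).deriv
        rw [this]
        field_simp
      have hstep : iterDB ψ (j + 1) f x = DBop ψ (j + 1) (iterDB ψ j f) x := rfl
      rw [hstep, DBop]
      have hj1 : j + 1 - 1 = j := rfl
      rw [hj1, hderiv1, hlog, IH x hx]
      have jac := jacobi ψ f j x hP0
      field_simp
      linear_combination (-(Wr ψ j x)) * jac
  intro x hx
  exact key k le_rfl x hx
end

section
/- Let f be a smooth real-valued function on an open interval I and for n ≥ 1 define the Hankel–Wronskian τ_n(x) := det( f^{(i+j−2)}(x) )_{i,j=1,…,n}, with τ_0 := 1. Then for every n ≥ 1 and every x ∈ I: τ_{n+1}(x) τ_{n−1}(x) = τ_n(x) τ_n″(x) − ( τ_n′(x) )². (Equivalently, ∂² ln τ_n = τ_{n+1}τ_{n−1}/τ_n² wherever τ_n ≠ 0: the one-dimensional semi-infinite Toda chain equation satisfied by the one-matrix model partition functions Z_n.) -/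
/-- The Hankel–Wronskian `τ_n(x) = det( f^{(i+j-2)}(x) )_{i,j=1,…,n}`, with `τ_0 = 1`. -/
noncomputable def tauH (f : ℝ → ℝ) (n : ℕ) (x : ℝ) : ℝ :=
  Matrix.det (Matrix.of fun i j : Fin n => iteratedDeriv ((i : ℕ) + (j : ℕ)) f x)

open Matrix Polynomial



noncomputable def detCMM (n : ℕ) : ContinuousMultilinearMap ℝ (fun _ : Fin n => (Fin n → ℝ)) ℝ :=
  { (Matrix.detRowAlternating : (Fin n → ℝ) [⋀^Fin n]→ₗ[ℝ] ℝ).toMultilinearMap with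
    cont := by
      show Continuous fun v : Fin n → Fin n → ℝ => Matrix.det (Matrix.of v)
      exact (continuous_id (X := Matrix (Fin n) (Fin n) ℝ)).matrix_det }

lemma hasDerivAt_det' {n : ℕ} (M : ℝ → Matrix (Fin n) (Fin n) ℝ)
    (M' : Matrix (Fin n) (Fin n) ℝ) (x : ℝ)
    (h : ∀ i j, HasDerivAt (fun y => M y i j) (M' i j) x) :
    HasDerivAt (fun y => (M y).det) (∑ i, ((M x).updateRow i (M' i)).det) x := by
  have hg : HasDerivAt (fun y => (fun i => M y i)) (fun i => M' i) x :=
    hasDerivAt_pi.2 fun i => hasDerivAt_pi.2 fun j => h i j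
  have hF := (detCMM n).hasFDerivAt (x := fun i => M x i)
  have h2 := hF.comp_hasDerivAt x hg
  convert h2 using 1
  · rfl
  · rfl
  · rfl
  rw [ContinuousMultilinearMap.linearDeriv_apply]
  rfl


variable {m : ℕ}

/-- The minor of the block matrix keeping row `inr r` and column `inr c`. -/
noncomputable def blk (B : Matrix (Fin m) (Fin m) ℝ) (C : Matrix (Fin m) (Fin 2) ℝ)
    (D : Matrix (Fin 2) (Fin m) ℝ) (E : Matrix (Fin 2) (Fin 2) ℝ) (r c : Fin 2) :
    Matrix (Fin m ⊕ Fin 1) (Fin m ⊕ Fin 1) ℝ :=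
  fromBlocks B (Matrix.of fun i (_ : Fin 1) => C i c) (Matrix.of fun (_ : Fin 1) j => D r j)
    (Matrix.of fun _ _ => E r c)

lemma DJ_inv (B : Matrix (Fin m) (Fin m) ℝ) (C : Matrix (Fin m) (Fin 2) ℝ)
    (D : Matrix (Fin 2) (Fin m) ℝ) (E : Matrix (Fin 2) (Fin 2) ℝ) [Invertible B] :
    (fromBlocks B C D E).det * B.det =
      (blk B C D E 0 0).det * (blk B C D E 1 1).det -
        (blk B C D E 0 1).det * (blk B C D E 1 0).det := by
  have h1 : (fromBlocks B C D E).det = B.det * (E - D * ⅟B * C).det := det_fromBlocks₁₁ ..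
  have h2 : ∀ r c, (blk B C D E r c).det = B.det * (E - D * ⅟B * C) r c := by
    intro r c
    rw [blk, det_fromBlocks₁₁]
    congr 1
    rw [det_fin_one]
    simp only [Matrix.sub_apply, Matrix.mul_apply, Matrix.of_apply, Finset.sum_mul,
      Finset.mul_sum]
  rw [h1, h2, h2, h2, h2, det_fin_two]
  ring

lemma DJ (B : Matrix (Fin m) (Fin m) ℝ) (C : Matrix (Fin m) (Fin 2) ℝ)
    (D : Matrix (Fin 2) (Fin m) ℝ) (E : Matrix (Fin 2) (Fin 2) ℝ) :
    (fromBlocks B C D E).det * B.det =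
      (blk B C D E 0 0).det * (blk B C D E 1 1).det -
        (blk B C D E 0 1).det * (blk B C D E 1 0).det := by
  classical
  set L : ℝ → ℝ := fun ε =>
    (fromBlocks (B + ε • 1) C D E).det * (B + ε • 1).det with hL
  set R : ℝ → ℝ := fun ε =>
    (blk (B + ε • 1) C D E 0 0).det * (blk (B + ε • 1) C D E 1 1).det -
      (blk (B + ε • 1) C D E 0 1).det * (blk (B + ε • 1) C D E 1 0).det with hR
  have keyP : ∀ ε : ℝ, ((-B).charpoly.eval ε) = (B + ε • 1).det := by
    intro ε
    rw [Matrix.charpoly, ← coe_evalRingHom, RingHom.map_det]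
    congr 1
    ext i j
    simp [charmatrix, Matrix.scalar, Matrix.map_apply, Matrix.diagonal, Matrix.one_apply,
      Matrix.smul_apply, apply_ite (eval ε)]
    ring
  have hroots : {ε : ℝ | (B + ε • 1).det = 0}.Finite := by
    have := Polynomial.finite_setOf_isRoot ((-B).charpoly_monic.ne_zero)
    refine this.subset fun ε hε => ?_
    simp only [Set.mem_setOf_eq, IsRoot.def, keyP]
    exact hε
  have hev : ∀ᶠ ε in nhdsWithin (0:ℝ) {0}ᶜ, (B + ε • 1).det ≠ 0 := by
    have h1 : ∀ᶠ ε in nhdsWithin (0:ℝ) {0}ᶜ, ε ∉ {ε : ℝ | (B + ε • 1).det = 0} \ {0} := by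
      refine Filter.Eventually.filter_mono nhdsWithin_le_nhds ?_
      refine IsOpen.eventually_mem ((hroots.diff).isClosed.isOpen_compl) ?_
      exact fun h => h.2 rfl
    have h2 : ∀ᶠ ε in nhdsWithin (0:ℝ) {0}ᶜ, ε ≠ 0 := eventually_mem_nhdsWithin.mono (by simp)
    filter_upwards [h1, h2] with ε hε1 hε2
    intro hd
    exact hε1 ⟨hd, hε2⟩
  have heq : ∀ᶠ ε in nhdsWithin (0:ℝ) {0}ᶜ, L ε = R ε := by
    filter_upwards [hev] with ε hε
    have : Invertible (B + ε • 1) := (B + ε • 1).invertibleOfIsUnitDet (isUnit_iff_ne_zero.2 hε)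
    exact DJ_inv (B + ε • 1) C D E
  have cB : Continuous fun ε : ℝ => B + ε • (1 : Matrix (Fin m) (Fin m) ℝ) := by
    apply continuous_matrix
    intro i j
    simp only [Matrix.add_apply, Matrix.smul_apply, smul_eq_mul]
    fun_prop
  have cL : Continuous L := ((cB.matrix_fromBlocks continuous_const continuous_const
    continuous_const).matrix_det).mul cB.matrix_det
  have cR : Continuous R := by
    have : ∀ r c : Fin 2, Continuous fun ε : ℝ => (blk (B + ε • 1) C D E r c).det := by
      intro r c
      exact (cB.matrix_fromBlocks continuous_const continuous_const
        continuous_const).matrix_det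
    exact ((this 0 0).mul (this 1 1)).sub ((this 0 1).mul (this 1 0))
  have t1 : Filter.Tendsto L (nhdsWithin (0:ℝ) {0}ᶜ) (nhds (L 0)) :=
    (cL.tendsto 0).mono_left nhdsWithin_le_nhds
  have t2 : Filter.Tendsto L (nhdsWithin (0:ℝ) {0}ᶜ) (nhds (R 0)) :=
    (((cR.tendsto 0).mono_left nhdsWithin_le_nhds)).congr' (heq.mono fun ε h => h.symm)
  have h0 : L 0 = R 0 := tendsto_nhds_unique t1 t2
  simpa [hL, hR] using h0
lemma hankelDJ (m : ℕ) (b : ℕ → ℝ) :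
    (Matrix.of fun i j : Fin (m+2) => b ((i:ℕ)+(j:ℕ))).det *
      (Matrix.of fun i j : Fin m => b ((i:ℕ)+(j:ℕ))).det =
    (Matrix.of fun i j : Fin (m+1) => b ((i:ℕ)+(j:ℕ))).det *
      (Matrix.of fun i j : Fin (m+1) =>
        b ((if (i:ℕ) = m then m+1 else (i:ℕ)) + (if (j:ℕ) = m then m+1 else (j:ℕ)))).det -
    (Matrix.of fun i j : Fin (m+1) => b ((i:ℕ) + (if (j:ℕ) = m then m+1 else (j:ℕ)))).det ^ 2 := by
  classical
  set B : Matrix (Fin m) (Fin m) ℝ := Matrix.of fun i j => b ((i:ℕ)+(j:ℕ)) with hB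
  set C : Matrix (Fin m) (Fin 2) ℝ := Matrix.of fun i c => b ((i:ℕ) + (m + (c:ℕ))) with hC
  set D : Matrix (Fin 2) (Fin m) ℝ := Matrix.of fun r j => b ((m + (r:ℕ)) + (j:ℕ)) with hD
  set E : Matrix (Fin 2) (Fin 2) ℝ := Matrix.of fun r c => b ((m + (r:ℕ)) + (m + (c:ℕ))) with hE
  have hA : (Matrix.of fun i j : Fin (m+2) => b ((i:ℕ)+(j:ℕ))).det = (fromBlocks B C D E).det := by
    have hs : (Matrix.of fun i j : Fin (m+2) => b ((i:ℕ)+(j:ℕ))).submatrix finSumFinEquiv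
        finSumFinEquiv = fromBlocks B C D E := by
      ext i j
      rcases i with i | i <;> rcases j with j | j <;>
        simp [Matrix.submatrix_apply, hB, hC, hD, hE]
    rw [← Matrix.det_submatrix_equiv_self finSumFinEquiv, hs]
  have hmin : ∀ r c : Fin 2,
      (blk B C D E r c).det =
      (Matrix.of fun i j : Fin (m+1) =>
        b ((if (i:ℕ) = m then m + (r:ℕ) else (i:ℕ)) +
           (if (j:ℕ) = m then m + (c:ℕ) else (j:ℕ)))).det := by
    intro r c
    have hs : (Matrix.of fun i j : Fin (m+1) =>
        b ((if (i:ℕ) = m then m + (r:ℕ) else (i:ℕ)) +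
           (if (j:ℕ) = m then m + (c:ℕ) else (j:ℕ)))).submatrix finSumFinEquiv finSumFinEquiv
        = blk B C D E r c := by
      ext i j
      rcases i with i | i <;> rcases j with j | j <;>
        simp only [Matrix.submatrix_apply, finSumFinEquiv_apply_left, finSumFinEquiv_apply_right,
        blk, fromBlocks_apply₁₁, fromBlocks_apply₁₂, fromBlocks_apply₂₁, fromBlocks_apply₂₂,
          Matrix.of_apply, Fin.coe_castAdd, Fin.coe_natAdd, hB, hC, hD, hE] <;>
        split_ifs with h1 h2 <;>
        first
          | exact congrArg b (by omega)
          | exact absurd h1 (by omega)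
          | (exact absurd ‹_› (by omega))
          | skip
      all_goals exact congrArg b (by omega)
    rw [← Matrix.det_submatrix_equiv_self finSumFinEquiv, hs]
  have h00 := hmin 0 0
  have h11 := hmin 1 1
  have h01 := hmin 0 1
  have h10 := hmin 1 0
  have e00 : (blk B C D E 0 0).det = (Matrix.of fun i j : Fin (m+1) => b ((i:ℕ)+(j:ℕ))).det := by
    rw [h00]; congr 1; ext i j
    simp only [Matrix.of_apply, Fin.isValue, Fin.val_zero]
    split_ifs <;> exact congrArg b (by omega)
  have e11 : (blk B C D E 1 1).det = (Matrix.of fun i j : Fin (m+1) =>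
      b ((if (i:ℕ) = m then m+1 else (i:ℕ)) + (if (j:ℕ) = m then m+1 else (j:ℕ)))).det := by
    rw [h11]
    norm_num
  have e01 : (blk B C D E 0 1).det = (Matrix.of fun i j : Fin (m+1) =>
      b ((i:ℕ) + (if (j:ℕ) = m then m+1 else (j:ℕ)))).det := by
    rw [h01]; congr 1; ext i j
    simp only [Matrix.of_apply, Fin.isValue, Fin.val_zero, Fin.val_one]
    split_ifs <;> exact congrArg b (by omega)
  have e10 : (blk B C D E 1 0).det = (Matrix.of fun i j : Fin (m+1) =>
      b ((i:ℕ) + (if (j:ℕ) = m then m+1 else (j:ℕ)))).det := by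
    rw [h10, ← Matrix.det_transpose]
    congr 1; ext i j
    simp only [Matrix.transpose_apply, Matrix.of_apply, Fin.isValue, Fin.val_zero, Fin.val_one]
    split_ifs <;> exact congrArg b (by omega)
  have key := DJ B C D E
  rw [hA, key, e00, e11, e01, e10]
  ring

section
variable {I : Set ℝ} {f : ℝ → ℝ}

lemma iter_smooth (hI : IsOpen I) (hf : ContDiffOn ℝ (⊤ : ℕ∞) f I) (k : ℕ) :
    ContDiffOn ℝ (⊤ : ℕ∞) (iteratedDeriv k f) I := by
  induction k with
  | zero => simpa [iteratedDeriv_zero] using hf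
  | succ k ih =>
    rw [iteratedDeriv_succ]
    have h1 : ContDiffOn ℝ (⊤ : ℕ∞) (derivWithin (iteratedDeriv k f) I) I :=
      ih.derivWithin hI.uniqueDiffOn (by simp)
    exact h1.congr fun x hx => (derivWithin_of_isOpen hI hx).symm

lemma hasD (hI : IsOpen I) (hf : ContDiffOn ℝ (⊤ : ℕ∞) f I) (k : ℕ) {x : ℝ} (hx : x ∈ I) :
    HasDerivAt (iteratedDeriv k f) (iteratedDeriv (k+1) f x) x := by
  have h := ((iter_smooth hI hf k).differentiableOn (by simp)) x hx
  have hd : DifferentiableAt ℝ (iteratedDeriv k f) x := h.differentiableAt (hI.mem_nhds hx)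
  rw [iteratedDeriv_succ]
  exact hd.hasDerivAt

lemma keyD (hI : IsOpen I) (hf : ContDiffOn ℝ (⊤ : ℕ∞) f I) {n : ℕ} (hn : 1 ≤ n)
    (c : Fin n → ℕ) {x : ℝ} (hx : x ∈ I) :
    HasDerivAt (fun y => (Matrix.of fun i j : Fin n => iteratedDeriv ((i:ℕ) + c j) f y).det)
      ((Matrix.of fun i j : Fin n =>
        iteratedDeriv ((if (i:ℕ) = n-1 then n else (i:ℕ)) + c j) f x).det) x := by
  have hij : ∀ i j : Fin n,
      HasDerivAt (fun y => (Matrix.of fun i j : Fin n => iteratedDeriv ((i:ℕ) + c j) f y) i j)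
        ((Matrix.of fun i j : Fin n => iteratedDeriv ((i:ℕ) + 1 + c j) f x) i j) x := by
    intro i j
    have := hasD hI hf ((i:ℕ) + c j) hx
    simp only [Matrix.of_apply]
    convert this using 2
    omega
  have h := hasDerivAt_det' _ _ x hij
  convert h using 1
  rw [Finset.sum_eq_single (⟨n-1, by omega⟩ : Fin n)]
  · congr 1
    ext i j
    simp only [Matrix.updateRow_apply, Matrix.of_apply]
    rcases eq_or_ne i (⟨n-1, by omega⟩ : Fin n) with h | h
    · rw [if_pos h, if_pos (by simpa [Fin.ext_iff] using h)]
      exact congrArg (fun k => iteratedDeriv k f x) (by simp [Fin.ext_iff] at h; omega)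
    · rw [if_neg h, if_neg (by simpa [Fin.ext_iff] using h)]
  · intro i _ hi
    have hlt : (i:ℕ) < n - 1 := by
      have h1 : (i:ℕ) < n := i.isLt
      have h2 : (i:ℕ) ≠ n - 1 := by simpa [Fin.ext_iff] using hi
      omega
    refine Matrix.det_zero_of_row_eq (i := i) (j := (⟨(i:ℕ)+1, by omega⟩ : Fin n)) ?_ ?_
    · simp [Fin.ext_iff]
    · funext j
      simp [Matrix.updateRow_apply, Fin.ext_iff]
  · intro h
    exact absurd (Finset.mem_univ _) h

end
theorem stmt11 (I : Set ℝ) (hI : IsOpen I) (f : ℝ → ℝ)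
    (hf : ContDiffOn ℝ (⊤ : ℕ∞) f I) :
    ∀ n : ℕ, 1 ≤ n → ∀ x ∈ I,
      tauH f (n + 1) x * tauH f (n - 1) x =
        tauH f n x * iteratedDeriv 2 (tauH f n) x - (deriv (tauH f n) x) ^ 2 := by
  intro n hn x hx
  obtain ⟨m, rfl⟩ : ∃ m, n = m + 1 := ⟨n - 1, by omega⟩
  set σ : ℝ → ℝ := fun y => (Matrix.of fun i j : Fin (m+1) =>
    iteratedDeriv ((i:ℕ) + (if (j:ℕ) = m then m+1 else (j:ℕ))) f y).det with hσ
  set ρ : ℝ → ℝ := fun y => (Matrix.of fun i j : Fin (m+1) =>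
    iteratedDeriv ((if (i:ℕ) = m then m+1 else (i:ℕ)) +
      (if (j:ℕ) = m then m+1 else (j:ℕ))) f y).det with hρ
  have h1 : ∀ y ∈ I, HasDerivAt (tauH f (m+1)) (σ y) y := by
    intro y hy
    have h := keyD hI hf (n := m+1) (by omega) (fun j => (j:ℕ)) hy
    have hval : (Matrix.of fun i j : Fin (m+1) =>
        iteratedDeriv ((if (i:ℕ) = (m+1)-1 then m+1 else (i:ℕ)) + (j:ℕ)) f y).det = σ y := by
      rw [hσ, ← Matrix.det_transpose]
      congr 1
      ext i j
      simp only [Matrix.transpose_apply, Matrix.of_apply]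
      exact congrArg (fun k => iteratedDeriv k f y) (by split_ifs <;> omega)
    rw [← hval]
    exact h
  have h2 : ∀ y ∈ I, HasDerivAt σ (ρ y) y := by
    intro y hy
    have h := keyD hI hf (n := m+1) (by omega) (fun j => if (j:ℕ) = m then m+1 else (j:ℕ)) hy
    rw [hσ, hρ]
    convert h using 2 <;> norm_num
  have dτ : deriv (tauH f (m+1)) x = σ x := (h1 x hx).deriv
  have evEq : deriv (tauH f (m+1)) =ᶠ[nhds x] σ := by
    filter_upwards [hI.mem_nhds hx] with y hy
    exact (h1 y hy).deriv
  have d2 : iteratedDeriv 2 (tauH f (m+1)) x = ρ x := by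
    have : iteratedDeriv 2 (tauH f (m+1)) = deriv (deriv (tauH f (m+1))) := by
      rw [show (2:ℕ) = 1 + 1 from rfl, iteratedDeriv_succ, iteratedDeriv_one]
    rw [this, evEq.deriv_eq]
    exact (h2 x hx).deriv
  rw [d2, dτ]
  have := hankelDJ m (fun k => iteratedDeriv k f x)
  show tauH f (m+2) x * tauH f (m+1-1) x = _
  rw [show m + 1 - 1 = m from rfl]
  exact this
end

section
/- Let f be a smooth real-valued function on an open set U ⊆ ℝ² and for n ≥ 1 define τ_n(x,y) := det( ∂_x^{i−1}∂_y^{j−1} f(x,y) )_{i,j=1,…,n}, with τ_0 := 1. Then for every n ≥ 1 and every (x,y) ∈ U: τ_{n+1}(x,y) τ_{n−1}(x,y) = τ_n(x,y) · ∂_x∂_y τ_n(x,y) − ∂_x τ_n(x,y) · ∂_y τ_n(x,y). (This is the bilinear two-dimensional Toda lattice equation ∂_x∂_y ln τ_n = τ_{n+1}τ_{n−1}/τ_n² satisfied by Darboux–Bäcklund orbits of constrained KP hierarchies and by two-matrix model partition functions.) -/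
/-- The mixed partial derivative `∂_x^i ∂_y^j f` of a function of two real variables. -/
noncomputable def pdxy (f : ℝ → ℝ → ℝ) (i j : ℕ) (x y : ℝ) : ℝ :=
  iteratedDeriv i (fun x' => iteratedDeriv j (f x') y) x

/-- The two-variable Wronskian `τ_n(x,y) = det( ∂_x^{i-1}∂_y^{j-1} f(x,y) )_{i,j=1,…,n}`,
with `τ_0 = 1`. -/
noncomputable def tau2 (f : ℝ → ℝ → ℝ) (n : ℕ) (x y : ℝ) : ℝ :=
  Matrix.det (Matrix.of fun i j : Fin n => pdxy f (i : ℕ) (j : ℕ) x y)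

open Matrix Finset
open scoped ContDiff


lemma hasDerivAt_det_col {m : ℕ} (A : ℝ → Matrix (Fin m) (Fin m) ℝ)
    (A' : Matrix (Fin m) (Fin m) ℝ) (t : ℝ)
    (h : ∀ i j, HasDerivAt (fun s => A s i j) (A' i j) t) :
    HasDerivAt (fun s => (A s).det)
      (∑ j, (Matrix.updateCol (A t) j (fun r => A' r j)).det) t := by
  have key : HasDerivAt (fun s => (A s).det)
      (∑ σ : Equiv.Perm (Fin m), ((Equiv.Perm.sign σ : ℤ) : ℝ) *
        ∑ i, (∏ j ∈ univ.erase i, A t (σ j) j) * A' (σ i) i) t := by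
    have : ∀ s, (A s).det = ∑ σ : Equiv.Perm (Fin m),
        ((Equiv.Perm.sign σ : ℤ) : ℝ) * ∏ i, A s (σ i) i := fun s => Matrix.det_apply' _
    simp only [funext this]
    apply HasDerivAt.fun_sum
    intro σ _
    have hp := HasDerivAt.finset_prod (u := univ) (f := fun i s => A s (σ i) i)
      (f' := fun i => A' (σ i) i) (fun i _ => h (σ i) i)
    simpa [smul_eq_mul] using hp.const_mul (((Equiv.Perm.sign σ : ℤ) : ℝ))
  convert key using 1
  simp only [Finset.mul_sum]
  rw [Finset.sum_comm]
  refine Finset.sum_congr rfl fun i _ => ?_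
  rw [Matrix.det_apply']
  refine Finset.sum_congr rfl fun σ _ => ?_
  rw [← Finset.mul_prod_erase univ _ (Finset.mem_univ i)]
  have h1 : ((A t).updateCol i fun r => A' r i) (σ i) i = A' (σ i) i := by
    simp [Matrix.updateCol_apply]
  have h2 : ∏ k ∈ univ.erase i, ((A t).updateCol i fun r => A' r i) (σ k) k =
      ∏ k ∈ univ.erase i, A t (σ k) k := by
    refine Finset.prod_congr rfl fun k hk => ?_
    simp [Matrix.updateCol_apply, (Finset.mem_erase.1 hk).1]
  rw [h1, h2]; ring

lemma hasDerivAt_det_row {m : ℕ} (A : ℝ → Matrix (Fin m) (Fin m) ℝ)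
    (A' : Matrix (Fin m) (Fin m) ℝ) (t : ℝ)
    (h : ∀ i j, HasDerivAt (fun s => A s i j) (A' i j) t) :
    HasDerivAt (fun s => (A s).det)
      (∑ i, (Matrix.updateRow (A t) i (fun j => A' i j)).det) t := by
  have key := hasDerivAt_det_col (fun s => (A s)ᵀ) A'ᵀ t (fun i j => h j i)
  simp only [Matrix.det_transpose] at key
  convert key using 1
  refine Finset.sum_congr rfl fun i _ => ?_
  rw [← Matrix.det_transpose]
  congr 1
  ext r c
  simp [Matrix.updateCol_apply, Matrix.updateRow_apply, Matrix.transpose_apply]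


/-- The "bump" index map. -/
def bmap (m : ℕ) (u : ℕ) (i : Fin (m+1)) : ℕ := if (i : ℕ) = m then m + u else (i : ℕ)

section Generic
variable (m : ℕ) (M : ℕ → ℕ → ℝ)

private def Pmat : Matrix (Fin m) (Fin m) ℝ := Matrix.of fun i j => M i j
private def Qmat : Matrix (Fin m) (Fin 2) ℝ := Matrix.of fun i u => M i (m + u)
private def Rmat : Matrix (Fin 2) (Fin m) ℝ := Matrix.of fun u j => M (m + u) j
private def Smat : Matrix (Fin 2) (Fin 2) ℝ := Matrix.of fun u v => M (m + u) (m + v)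

private lemma full_det [Invertible (Pmat m M)] :
    Matrix.det (Matrix.of fun i j : Fin (m+2) => M i j) =
      (Pmat m M).det * (Smat m M - Rmat m M * ⅟(Pmat m M) * Qmat m M).det := by
  rw [← Matrix.det_fromBlocks₁₁ (Pmat m M) (Qmat m M) (Rmat m M) (Smat m M),
    ← Matrix.det_submatrix_equiv_self (finSumFinEquiv (m := m) (n := 2))]
  refine congrArg Matrix.det ?_
  ext i j
  cases i <;> cases j <;>
    simp [Pmat, Qmat, Rmat, Smat, finSumFinEquiv_apply_left, finSumFinEquiv_apply_right]

private lemma minor_det [Invertible (Pmat m M)] (u v : Fin 2) :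
    Matrix.det (Matrix.of fun i j : Fin (m+1) => M (bmap m u i) (bmap m v j)) =
      (Pmat m M).det * (Smat m M - Rmat m M * ⅟(Pmat m M) * Qmat m M) u v := by
  rw [← Matrix.det_submatrix_equiv_self (finSumFinEquiv (m := m) (n := 1))]
  have hblock : ((Matrix.of fun i j : Fin (m+1) => M (bmap m u i) (bmap m v j)).submatrix
        finSumFinEquiv finSumFinEquiv) =
      Matrix.fromBlocks (Pmat m M) (Matrix.of fun i (_ : Fin 1) => M i (m + v))
        (Matrix.of fun (_ : Fin 1) j => M (m + u) j)
        (Matrix.of fun (_ : Fin 1) (_ : Fin 1) => M (m + u) (m + v)) := by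
    ext i j
    cases i with
    | inl i =>
      cases j with
      | inl j =>
        simp [Pmat, finSumFinEquiv_apply_left, bmap, Nat.ne_of_lt i.is_lt, Nat.ne_of_lt j.is_lt]
      | inr j =>
        simp [finSumFinEquiv_apply_left, finSumFinEquiv_apply_right, bmap, Nat.ne_of_lt i.is_lt]
    | inr i =>
      cases j with
      | inl j =>
        simp [finSumFinEquiv_apply_left, finSumFinEquiv_apply_right, bmap, Nat.ne_of_lt j.is_lt]
      | inr j =>
        simp [finSumFinEquiv_apply_right, bmap]
  rw [hblock, Matrix.det_fromBlocks₁₁, Matrix.det_fin_one]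
  congr 1

private lemma jacobi_invertible (h : IsUnit (Matrix.det (Matrix.of fun i j : Fin m => M i j))) :
    Matrix.det (Matrix.of fun i j : Fin (m+2) => M i j) *
      Matrix.det (Matrix.of fun i j : Fin m => M i j) =
    Matrix.det (Matrix.of fun i j : Fin (m+1) => M i j) *
      Matrix.det (Matrix.of fun i j : Fin (m+1) => M (bmap m 1 i) (bmap m 1 j)) -
    Matrix.det (Matrix.of fun i j : Fin (m+1) => M (bmap m 1 i) j) *
      Matrix.det (Matrix.of fun i j : Fin (m+1) => M i (bmap m 1 j)) := by
  letI : Invertible (Pmat m M) := Matrix.invertibleOfIsUnitDet _ h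
  have h00 := minor_det m M 0 0
  have h11 := minor_det m M 1 1
  have h10 := minor_det m M 1 0
  have h01 := minor_det m M 0 1
  have hb0 : ∀ i : Fin (m+1), bmap m ((0 : Fin 2) : ℕ) i = (i : ℕ) := by
    intro i; simp only [bmap, Fin.val_zero]; split <;> omega
  have hb1 : ∀ i : Fin (m+1), bmap m ((1 : Fin 2) : ℕ) i = bmap m 1 i := by
    intro i; simp [bmap]
  simp only [hb0, hb1] at h00 h11 h10 h01
  rw [h00, h11, h10, h01, full_det m M]
  have hP : Matrix.det (Matrix.of fun i j : Fin m => M i j) = (Pmat m M).det := rfl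
  rw [hP, Matrix.det_fin_two]
  ring

/-- Desnanot–Jacobi identity (corner version), for arbitrary real entries. -/
lemma jacobi_identity (m : ℕ) (M : ℕ → ℕ → ℝ) :
    Matrix.det (Matrix.of fun i j : Fin (m+2) => M i j) *
      Matrix.det (Matrix.of fun i j : Fin m => M i j) =
    Matrix.det (Matrix.of fun i j : Fin (m+1) => M i j) *
      Matrix.det (Matrix.of fun i j : Fin (m+1) => M (bmap m 1 i) (bmap m 1 j)) -
    Matrix.det (Matrix.of fun i j : Fin (m+1) => M (bmap m 1 i) j) *
      Matrix.det (Matrix.of fun i j : Fin (m+1) => M i (bmap m 1 j)) := by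
  classical
  set Mt : ℝ → ℕ → ℕ → ℝ := fun t a b => M a b + (if a = b ∧ a < m then t else 0) with hMt
  -- the perturbed small block is `P + t • 1`
  have hPt : ∀ t, (Matrix.of fun i j : Fin m => Mt t i j) = Pmat m M + t • (1 : Matrix (Fin m) (Fin m) ℝ) := by
    intro t
    ext i j
    by_cases hij : i = j
    · subst hij; simp [Mt, Pmat, Matrix.one_apply, i.is_lt]
    · have : ¬((i : ℕ) = (j : ℕ)) := fun hc => hij (Fin.val_injective hc)
      simp [Mt, Pmat, Matrix.one_apply, hij, this]
  -- the characteristic polynomial trick: the set of bad `t` is finite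
  set p : Polynomial ℝ := (-(Pmat m M)).charpoly with hp
  have hpeval : ∀ t, p.eval t = (Pmat m M + t • 1).det := by
    intro t
    have h0 := RingHom.map_det (Polynomial.evalRingHom t) (charmatrix (-(Pmat m M)))
    simp only [RingHom.mapMatrix_apply, Polynomial.coe_evalRingHom] at h0
    rw [hp, Matrix.charpoly, h0]
    congr 1
    ext i j
    by_cases hij : i = j
    · subst hij
      simp [charmatrix_apply_eq, Matrix.one_apply]
      ring
    · simp [charmatrix_apply_ne _ _ _ hij, Matrix.one_apply, hij]
  have hpne : p ≠ 0 := (Matrix.charpoly_monic _).ne_zero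
  set S : Set ℝ := {t | p.eval t = 0} with hS
  have hSfin : S.Finite := by
    refine Set.Finite.subset p.roots.toFinset.finite_toSet fun t ht => ?_
    rw [Finset.mem_coe, Multiset.mem_toFinset, Polynomial.mem_roots hpne]
    exact ht
  have hdense : Dense Sᶜ := hSfin.countable.dense_compl ℝ
  have hNB : Filter.NeBot (nhdsWithin (0 : ℝ) Sᶜ) :=
    mem_closure_iff_nhdsWithin_neBot.mp (hdense 0)
  -- both sides as functions of t
  set L : ℝ → ℝ := fun t =>
    Matrix.det (Matrix.of fun i j : Fin (m+2) => Mt t i j) *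
      Matrix.det (Matrix.of fun i j : Fin m => Mt t i j) with hL
  set R : ℝ → ℝ := fun t =>
    Matrix.det (Matrix.of fun i j : Fin (m+1) => Mt t i j) *
      Matrix.det (Matrix.of fun i j : Fin (m+1) => Mt t (bmap m 1 i) (bmap m 1 j)) -
    Matrix.det (Matrix.of fun i j : Fin (m+1) => Mt t (bmap m 1 i) j) *
      Matrix.det (Matrix.of fun i j : Fin (m+1) => Mt t i (bmap m 1 j)) with hR
  have centry : ∀ a b : ℕ, Continuous fun t : ℝ => Mt t a b := by
    intro a b
    by_cases h : a = b ∧ a < m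
    · obtain ⟨rfl, h2⟩ := h
      simpa [Mt, h2] using (by fun_prop : Continuous fun t : ℝ => M a a + t)
    · simpa [Mt, h] using (continuous_const : Continuous fun _ : ℝ => M a b)
  have cdet : ∀ (k : ℕ) (ri cj : Fin k → ℕ),
      Continuous fun t => Matrix.det (Matrix.of fun i j : Fin k => Mt t (ri i) (cj j)) :=
    fun k ri cj => Continuous.matrix_det (continuous_pi fun i => continuous_pi fun j => centry _ _)
  have cL : Continuous L :=
    (cdet (m+2) (fun i => (i : ℕ)) (fun j => (j : ℕ))).mul
      (cdet m (fun i => (i : ℕ)) (fun j => (j : ℕ)))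
  have cR : Continuous R :=
    ((cdet (m+1) (fun i => (i : ℕ)) (fun j => (j : ℕ))).mul
        (cdet (m+1) (bmap m 1) (bmap m 1))).sub
      ((cdet (m+1) (bmap m 1) (fun j => (j : ℕ))).mul
        (cdet (m+1) (fun i => (i : ℕ)) (bmap m 1)))
  have heq : ∀ t ∈ Sᶜ, L t = R t := by
    intro t ht
    have hunit : IsUnit (Matrix.det (Matrix.of fun i j : Fin m => Mt t i j)) := by
      rw [hPt t]
      refine isUnit_iff_ne_zero.mpr ?_
      rw [← hpeval t]
      exact ht
    exact jacobi_invertible m (Mt t) hunit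
  haveI := hNB
  have h1 : Filter.Tendsto L (nhdsWithin 0 Sᶜ) (nhds (L 0)) :=
    (cL.tendsto 0).mono_left nhdsWithin_le_nhds
  have h2 : Filter.Tendsto R (nhdsWithin 0 Sᶜ) (nhds (R 0)) :=
    (cR.tendsto 0).mono_left nhdsWithin_le_nhds
  have heq' : L =ᶠ[nhdsWithin 0 Sᶜ] R := eventually_mem_nhdsWithin.mono fun t ht => heq t ht
  have hLR : L 0 = R 0 := tendsto_nhds_unique (h1.congr' heq') h2
  have hM0 : ∀ a b : ℕ, Mt 0 a b = M a b := by intro a b; simp [Mt]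
  simp only [hL, hR, hM0] at hLR
  exact hLR



private lemma two_le_inf : (2 : WithTop ℕ∞) ≤ ∞ := by
  rw [show ((2 : WithTop ℕ∞)) = ((2 : ℕ∞) : WithTop ℕ∞) by rfl]
  exact WithTop.coe_le_coe.mpr le_top
private lemma one_le_inf : (1 : WithTop ℕ∞) ≤ ∞ := by
  rw [show ((1 : WithTop ℕ∞)) = ((1 : ℕ∞) : WithTop ℕ∞) by rfl]
  exact WithTop.coe_le_coe.mpr le_top
private lemma inf_add_one_le : ∞ + 1 ≤ ∞ := by
  rw [show (∞ + 1 : WithTop ℕ∞) = ((⊤ + 1 : ℕ∞) : WithTop ℕ∞) by rfl]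
  simp

/-- Partial derivative in the first variable. -/
noncomputable def Dx (G : ℝ × ℝ → ℝ) : ℝ × ℝ → ℝ := fun q => deriv (fun x => G (x, q.2)) q.1
/-- Partial derivative in the second variable. -/
noncomputable def Dy (G : ℝ × ℝ → ℝ) : ℝ × ℝ → ℝ := fun q => deriv (fun y => G (q.1, y)) q.2

section slices
variable {E : Type*} [NormedAddCommGroup E] [NormedSpace ℝ E] {G : ℝ × ℝ → E} {p : ℝ × ℝ}

private lemma hasDerivAt_slice_x (hd : DifferentiableAt ℝ G p) :
    HasDerivAt (fun x => G (x, p.2)) (fderiv ℝ G p (1, 0)) p.1 := by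
  have hline : HasDerivAt (fun x : ℝ => (x, p.2)) ((1 : ℝ), (0 : ℝ)) p.1 :=
    HasDerivAt.prodMk (hasDerivAt_id p.1) (hasDerivAt_const p.1 p.2)
  have hd' : HasFDerivAt G (fderiv ℝ G p) (p.1, p.2) := by
    rw [Prod.mk.eta]; exact hd.hasFDerivAt
  exact hd'.comp_hasDerivAt p.1 hline

private lemma hasDerivAt_slice_y (hd : DifferentiableAt ℝ G p) :
    HasDerivAt (fun y => G (p.1, y)) (fderiv ℝ G p (0, 1)) p.2 := by
  have hline : HasDerivAt (fun y : ℝ => (p.1, y)) ((0 : ℝ), (1 : ℝ)) p.2 :=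
    HasDerivAt.prodMk (hasDerivAt_const p.2 p.1) (hasDerivAt_id p.2)
  have hd' : HasFDerivAt G (fderiv ℝ G p) (p.1, p.2) := by
    rw [Prod.mk.eta]; exact hd.hasFDerivAt
  exact hd'.comp_hasDerivAt p.2 hline

end slices

private lemma dx_eq_fderiv {G : ℝ × ℝ → ℝ} {p : ℝ × ℝ} (hd : DifferentiableAt ℝ G p) :
    Dx G p = fderiv ℝ G p (1, 0) := (hasDerivAt_slice_x hd).deriv

private lemma dy_eq_fderiv {G : ℝ × ℝ → ℝ} {p : ℝ × ℝ} (hd : DifferentiableAt ℝ G p) :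
    Dy G p = fderiv ℝ G p (0, 1) := (hasDerivAt_slice_y hd).deriv

section smooth
variable {U : Set (ℝ × ℝ)} {G : ℝ × ℝ → ℝ}

private lemma contDiffOn_fderiv_apply (hU : IsOpen U) (hG : ContDiffOn ℝ ∞ G U) (v : ℝ × ℝ) :
    ContDiffOn ℝ ∞ (fun q => fderiv ℝ G q v) U :=
  (hG.fderiv_of_isOpen hU inf_add_one_le).clm_apply contDiffOn_const

private lemma diffAt_of (hU : IsOpen U) (hG : ContDiffOn ℝ ∞ G U) {p : ℝ × ℝ} (hp : p ∈ U) :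
    DifferentiableAt ℝ G p :=
  (hG.contDiffAt (hU.mem_nhds hp)).differentiableAt (by simp)

private lemma contDiffOn_Dx (hU : IsOpen U) (hG : ContDiffOn ℝ ∞ G U) :
    ContDiffOn ℝ ∞ (Dx G) U :=
  (contDiffOn_fderiv_apply hU hG (1, 0)).congr fun q hq =>
    dx_eq_fderiv (diffAt_of hU hG hq)

private lemma contDiffOn_Dy (hU : IsOpen U) (hG : ContDiffOn ℝ ∞ G U) :
    ContDiffOn ℝ ∞ (Dy G) U :=
  (contDiffOn_fderiv_apply hU hG (0, 1)).congr fun q hq =>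
    dy_eq_fderiv (diffAt_of hU hG hq)

private lemma slice_mem_x (hU : IsOpen U) {p : ℝ × ℝ} (hp : p ∈ U) :
    ∀ᶠ x in nhds p.1, (x, p.2) ∈ U := by
  have hc : ContinuousAt (fun x : ℝ => (x, p.2)) p.1 :=
    (continuous_id.prodMk continuous_const).continuousAt
  exact hc.eventually_mem (by simpa using hU.mem_nhds hp)

private lemma slice_mem_y (hU : IsOpen U) {p : ℝ × ℝ} (hp : p ∈ U) :
    ∀ᶠ y in nhds p.2, (p.1, y) ∈ U := by
  have hc : ContinuousAt (fun y : ℝ => (p.1, y)) p.2 :=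
    (continuous_const.prodMk continuous_id).continuousAt
  exact hc.eventually_mem (by simpa using hU.mem_nhds hp)

/-- Clairaut's theorem in the form we need. -/
private lemma dxdy_swap (hU : IsOpen U) (hG : ContDiffOn ℝ ∞ G U) {p : ℝ × ℝ} (hp : p ∈ U) :
    Dx (Dy G) p = Dy (Dx G) p := by
  have hfd : ContDiffOn ℝ ∞ (fderiv ℝ G) U := hG.fderiv_of_isOpen hU inf_add_one_le
  have hdfd : DifferentiableAt ℝ (fderiv ℝ G) p :=
    (hfd.contDiffAt (hU.mem_nhds hp)).differentiableAt (by simp)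
  -- derivative of `q ↦ fderiv ℝ G q v` in the x and y directions
  have happx : ∀ v : ℝ × ℝ, HasDerivAt (fun x : ℝ => fderiv ℝ G (x, p.2) v)
      (fderiv ℝ (fderiv ℝ G) p (1, 0) v) p.1 := by
    intro v
    have h1 : HasDerivAt (fun x : ℝ => fderiv ℝ G (x, p.2))
        (fderiv ℝ (fderiv ℝ G) p (1, 0)) p.1 := hasDerivAt_slice_x hdfd
    have h2 := (ContinuousLinearMap.apply ℝ ℝ v).hasFDerivAt.comp_hasDerivAt p.1 h1
    exact h2
  have happy : ∀ v : ℝ × ℝ, HasDerivAt (fun y : ℝ => fderiv ℝ G (p.1, y) v)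
      (fderiv ℝ (fderiv ℝ G) p (0, 1) v) p.2 := by
    intro v
    have h1 : HasDerivAt (fun y : ℝ => fderiv ℝ G (p.1, y))
        (fderiv ℝ (fderiv ℝ G) p (0, 1)) p.2 := hasDerivAt_slice_y hdfd
    have h2 := (ContinuousLinearMap.apply ℝ ℝ v).hasFDerivAt.comp_hasDerivAt p.2 h1
    exact h2
  have hx : Dx (Dy G) p = fderiv ℝ (fderiv ℝ G) p (1, 0) (0, 1) := by
    have hev : (fun x => Dy G (x, p.2)) =ᶠ[nhds p.1]
        (fun x => fderiv ℝ G (x, p.2) (0, 1)) := by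
      filter_upwards [slice_mem_x hU hp] with x hx
      exact dy_eq_fderiv (diffAt_of hU hG hx)
    have : Dx (Dy G) p = deriv (fun x => fderiv ℝ G (x, p.2) (0, 1)) p.1 := hev.deriv_eq
    rw [this, (happx (0, 1)).deriv]
  have hy : Dy (Dx G) p = fderiv ℝ (fderiv ℝ G) p (0, 1) (1, 0) := by
    have hev : (fun y => Dx G (p.1, y)) =ᶠ[nhds p.2]
        (fun y => fderiv ℝ G (p.1, y) (1, 0)) := by
      filter_upwards [slice_mem_y hU hp] with y hy
      exact dx_eq_fderiv (diffAt_of hU hG hy)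
    have : Dy (Dx G) p = deriv (fun y => fderiv ℝ G (p.1, y) (1, 0)) p.2 := hev.deriv_eq
    rw [this, (happy (1, 0)).deriv]
  rw [hx, hy]
  exact (hG.contDiffAt (hU.mem_nhds hp)).isSymmSndFDerivAt (by rw [minSmoothness_of_isRCLikeNormedField]; exact two_le_inf) (1, 0) (0, 1)

end smooth

section PDsec
variable (f : ℝ → ℝ → ℝ)

private noncomputable def PD (i j : ℕ) : ℝ × ℝ → ℝ := fun q => pdxy f i j q.1 q.2

private lemma PD_succ_x (i j : ℕ) : PD f (i+1) j = Dx (PD f i j) := by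
  funext q
  simp only [PD, pdxy, Dx, iteratedDeriv_succ]

private lemma PD_zero_y (j : ℕ) : PD f 0 (j+1) = Dy (PD f 0 j) := by
  funext q
  simp only [PD, pdxy, Dy, iteratedDeriv_succ, iteratedDeriv_zero]

variable {U : Set (ℝ × ℝ)}

private lemma PD_smooth (hU : IsOpen U)
    (hf : ContDiffOn ℝ ∞ (fun p : ℝ × ℝ => f p.1 p.2) U) :
    ∀ i j, ContDiffOn ℝ ∞ (PD f i j) U := by
  have h0 : ∀ j, ContDiffOn ℝ ∞ (PD f 0 j) U := by
    intro j
    induction j with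
    | zero => exact hf.congr (fun q _ => by simp [PD, pdxy])
    | succ j ih => rw [PD_zero_y]; exact contDiffOn_Dy hU ih
  intro i
  induction i with
  | zero => exact h0
  | succ i ih => intro j; rw [PD_succ_x]; exact contDiffOn_Dx hU (ih j)

private lemma PD_swap (hU : IsOpen U)
    (hf : ContDiffOn ℝ ∞ (fun p : ℝ × ℝ => f p.1 p.2) U) :
    ∀ i j, ∀ p ∈ U, Dy (PD f i j) p = PD f i (j+1) p := by
  intro i
  induction i with
  | zero => intro j p hp; rw [PD_zero_y]
  | succ i ih =>
    intro j p hp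
    rw [PD_succ_x f i j, PD_succ_x f i (j+1)]
    have h1 : Dy (Dx (PD f i j)) p = Dx (Dy (PD f i j)) p :=
      (dxdy_swap hU (PD_smooth f hU hf i j) hp).symm
    rw [h1]
    have hloc : (fun x => Dy (PD f i j) (x, p.2)) =ᶠ[nhds p.1]
        (fun x => PD f i (j+1) (x, p.2)) := by
      filter_upwards [slice_mem_x hU hp] with x hx
      exact ih j (x, p.2) hx
    exact hloc.deriv_eq

private lemma pdxy_hasDerivAt_x (hU : IsOpen U)
    (hf : ContDiffOn ℝ ∞ (fun p : ℝ × ℝ => f p.1 p.2) U)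
    (i j : ℕ) {x y : ℝ} (h : (x, y) ∈ U) :
    HasDerivAt (fun x' => pdxy f i j x' y) (pdxy f (i+1) j x y) x := by
  have hd : DifferentiableAt ℝ (PD f i j) (x, y) := diffAt_of hU (PD_smooth f hU hf i j) h
  have h2 : pdxy f (i+1) j x y = fderiv ℝ (PD f i j) (x, y) (1, 0) := by
    have h3 : pdxy f (i+1) j x y = Dx (PD f i j) (x, y) := congrFun (PD_succ_x f i j) (x, y)
    rw [h3]
    exact dx_eq_fderiv hd
  rw [h2]
  exact hasDerivAt_slice_x hd

private lemma pdxy_hasDerivAt_y (hU : IsOpen U)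
    (hf : ContDiffOn ℝ ∞ (fun p : ℝ × ℝ => f p.1 p.2) U)
    (i j : ℕ) {x y : ℝ} (h : (x, y) ∈ U) :
    HasDerivAt (fun y' => pdxy f i j x y') (pdxy f i (j+1) x y) y := by
  have hd : DifferentiableAt ℝ (PD f i j) (x, y) := diffAt_of hU (PD_smooth f hU hf i j) h
  have h2 : pdxy f i (j+1) x y = fderiv ℝ (PD f i j) (x, y) (0, 1) := by
    have h3 : pdxy f i (j+1) x y = Dy (PD f i j) (x, y) :=
      (PD_swap f hU hf i j (x, y) h).symm
    rw [h3]
    exact dy_eq_fderiv hd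
  rw [h2]
  exact hasDerivAt_slice_y hd

end PDsec



private lemma sum_bump (k : ℕ) (N : ℕ → Fin (k+1) → ℝ) :
    ∑ i : Fin (k+1), (Matrix.updateRow (Matrix.of fun i j : Fin (k+1) => N i j) i
        (N ((i : ℕ)+1))).det
      = Matrix.det (Matrix.of fun i j : Fin (k+1) => N (bmap k 1 i) j) := by
  rw [Finset.sum_eq_single (Fin.last k)]
  · refine congrArg Matrix.det ?_
    ext i j
    rw [Matrix.updateRow_apply]
    by_cases h : i = Fin.last k
    · subst h; simp [bmap, Fin.val_last]
    · have hv : (i : ℕ) ≠ k := fun hc => h (Fin.ext (by simp [hc, Fin.val_last]))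
      simp [h, bmap, hv]
  · intro i _ hi
    have hlt : (i : ℕ) < k := by
      have h1 := i.is_lt
      rcases Nat.lt_succ_iff_lt_or_eq.mp h1 with h | h
      · exact h
      · exact absurd (Fin.ext (by simp [h, Fin.val_last])) hi
    have hne : i ≠ (⟨(i : ℕ)+1, by omega⟩ : Fin (k+1)) := by
      intro hc
      have := congrArg Fin.val hc
      simp at this
    apply Matrix.det_zero_of_row_eq hne
    rw [Matrix.updateRow_self, Matrix.updateRow_ne (Ne.symm hne)]
    rfl
  · simp

private lemma sum_bump_col (k : ℕ) (N : Fin (k+1) → ℕ → ℝ) :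
    ∑ j : Fin (k+1), (Matrix.updateCol (Matrix.of fun i j : Fin (k+1) => N i j) j
        (fun r => N r ((j : ℕ)+1))).det
      = Matrix.det (Matrix.of fun i j : Fin (k+1) => N i (bmap k 1 j)) := by
  have key := sum_bump k (fun a j => N j a)
  have h1 : ∀ j : Fin (k+1),
      (Matrix.updateCol (Matrix.of fun i j : Fin (k+1) => N i j) j
        (fun r => N r ((j : ℕ)+1))).det =
      (Matrix.updateRow (Matrix.of fun i j' : Fin (k+1) => N j' i) j
        (fun r => N r ((j : ℕ)+1))).det := by
    intro j
    rw [← Matrix.det_transpose]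
    refine congrArg Matrix.det ?_
    ext a b
    simp [Matrix.updateCol_apply, Matrix.updateRow_apply]
  have h2 : Matrix.det (Matrix.of fun i j : Fin (k+1) => N i (bmap k 1 j)) =
      Matrix.det (Matrix.of fun i j : Fin (k+1) => N j (bmap k 1 i)) := by
    rw [← Matrix.det_transpose]
    rfl
  rw [h2, ← key]
  exact Finset.sum_congr rfl fun j _ => h1 j


section Tau
variable (f : ℝ → ℝ → ℝ) {U : Set (ℝ × ℝ)}

private lemma tau2_deriv_x (hU : IsOpen U)
    (hf : ContDiffOn ℝ ∞ (fun p : ℝ × ℝ => f p.1 p.2) U) (m : ℕ) {x y : ℝ}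
    (h : (x, y) ∈ U) :
    HasDerivAt (fun x' => tau2 f (m+1) x' y)
      (Matrix.det (Matrix.of fun i j : Fin (m+1) => pdxy f (bmap m 1 i) (j : ℕ) x y)) x := by
  have hD := hasDerivAt_det_row (fun s => Matrix.of fun i j : Fin (m+1) => pdxy f (i : ℕ) (j : ℕ) s y)
      (Matrix.of fun i j : Fin (m+1) => pdxy f ((i : ℕ)+1) (j : ℕ) x y) x
      (fun i j => pdxy_hasDerivAt_x f hU hf (i : ℕ) (j : ℕ) h)
  have hs := sum_bump m (fun a j => pdxy f a (j : ℕ) x y)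
  simp only [Matrix.of_apply] at hD
  rw [hs] at hD
  exact hD

private lemma tau2_deriv_y (hU : IsOpen U)
    (hf : ContDiffOn ℝ ∞ (fun p : ℝ × ℝ => f p.1 p.2) U) (m : ℕ) {x y : ℝ}
    (h : (x, y) ∈ U) :
    HasDerivAt (fun y' => tau2 f (m+1) x y')
      (Matrix.det (Matrix.of fun i j : Fin (m+1) => pdxy f (i : ℕ) (bmap m 1 j) x y)) y := by
  have hD := hasDerivAt_det_col (fun s => Matrix.of fun i j : Fin (m+1) => pdxy f (i : ℕ) (j : ℕ) x s)
      (Matrix.of fun i j : Fin (m+1) => pdxy f (i : ℕ) ((j : ℕ)+1) x y) y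
      (fun i j => pdxy_hasDerivAt_y f hU hf (i : ℕ) (j : ℕ) h)
  have hs := sum_bump_col m (fun i b => pdxy f (i : ℕ) b x y)
  simp only [Matrix.of_apply] at hD
  rw [hs] at hD
  exact hD

private lemma tau2_deriv_xy (hU : IsOpen U)
    (hf : ContDiffOn ℝ ∞ (fun p : ℝ × ℝ => f p.1 p.2) U) (m : ℕ) {x y : ℝ}
    (h : (x, y) ∈ U) :
    deriv (fun x' => deriv (fun y' => tau2 f (m+1) x' y') y) x =
      Matrix.det (Matrix.of fun i j : Fin (m+1) => pdxy f (bmap m 1 i) (bmap m 1 j) x y) := by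
  have hev : (fun x' => deriv (fun y' => tau2 f (m+1) x' y') y) =ᶠ[nhds x]
      (fun x' => Matrix.det (Matrix.of fun i j : Fin (m+1) => pdxy f (i : ℕ) (bmap m 1 j) x' y)) := by
    have hsl := slice_mem_x hU (p := (x, y)) h
    filter_upwards [hsl] with x' hx'
    exact (tau2_deriv_y f hU hf m hx').deriv
  rw [hev.deriv_eq]
  have hD := hasDerivAt_det_row
      (fun s => Matrix.of fun i j : Fin (m+1) => pdxy f (i : ℕ) (bmap m 1 j) s y)
      (Matrix.of fun i j : Fin (m+1) => pdxy f ((i : ℕ)+1) (bmap m 1 j) x y) x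
      (fun i j => pdxy_hasDerivAt_x f hU hf (i : ℕ) (bmap m 1 j) h)
  have hs := sum_bump m (fun a j => pdxy f a (bmap m 1 j) x y)
  simp only [Matrix.of_apply] at hD
  rw [hs] at hD
  exact hD.deriv

end Tau

theorem stmt12 (U : Set (ℝ × ℝ)) (hU : IsOpen U) (f : ℝ → ℝ → ℝ)
    (hf : ContDiffOn ℝ (⊤ : ℕ∞) (fun p : ℝ × ℝ => f p.1 p.2) U) :
    ∀ n : ℕ, 1 ≤ n → ∀ x y : ℝ, (x, y) ∈ U →
      tau2 f (n + 1) x y * tau2 f (n - 1) x y =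
        tau2 f n x y * deriv (fun x' => deriv (fun y' => tau2 f n x' y') y) x -
          deriv (fun x' => tau2 f n x' y) x * deriv (fun y' => tau2 f n x y') y := by
  intro n hn x y hxy
  obtain ⟨m, rfl⟩ : ∃ m, n = m + 1 := ⟨n - 1, (Nat.succ_pred_eq_of_pos hn).symm⟩
  have hf' : ContDiffOn ℝ ∞ (fun p : ℝ × ℝ => f p.1 p.2) U := hf.of_le (by simp)
  rw [(tau2_deriv_x f hU hf' m hxy).deriv, (tau2_deriv_y f hU hf' m hxy).deriv,
    tau2_deriv_xy f hU hf' m hxy]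
  have hm : m + 1 - 1 = m := rfl
  rw [hm]
  exact jacobi_identity m (fun a b => pdxy f a b x y)
end Generic
end
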